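/- arXiv:2205.15287 — 2 statements merged into one kernel-verified Lean document; each statement's English description precedes it below -/
import Mathlib

section
/- Assume in addition that the martingale (⟨1, B̄_n⟩)_{n≥0} is uniformly integrable (for a genuine branching random walk with offspring distribution μ of mean m > 1 this holds, by the Kesten–Stigum theorem, exactly when Σ_n μ(n) n log n < ∞). Let φ : ∂ → ℝ be continuous with harmonic extension h(x) := 𝐄_x[φ(X_∞)], and let W be the almost sure weak limit of the sequence of random finite measures (B̄_n)_{n≥0} on C. Then E[∫_∂ φ dW] = 𝐄_o[φ(X_∞)]. -/
open MeasureTheory Filter Topology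

/-- The (rescaled) branching random walk configuration `w : S → ℝ≥0∞`, viewed as a finite
measure on the compactification `C` via the embedding `ι`: the measure `∑ₓ w(x) δ_{ι(x)}`. -/
noncomputable def brwMeasure {S C : Type*} [MeasurableSpace C] (ι : S → C) (w : S → ENNReal) :
    MeasureTheory.Measure C :=
  MeasureTheory.Measure.sum fun x => w x • MeasureTheory.Measure.dirac (ι x)

/-- `W` is a subsequential weak limit of the sequence of finite measures `μs` on `C`:
along some strictly increasing subsequence, the integrals of every bounded continuous
function converge to the corresponding integral against `W`. -/
def IsSubseqWeakLimit {C : Type*} [TopologicalSpace C] [MeasurableSpace C]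
    (μs : ℕ → MeasureTheory.Measure C) (W : MeasureTheory.Measure C) : Prop :=
  ∃ φ : ℕ → ℕ, StrictMono φ ∧
    ∀ f : BoundedContinuousFunction C ℝ,
      Filter.Tendsto (fun k => ∫ c, f c ∂(μs (φ k))) Filter.atTop (nhds (∫ c, f c ∂W))

open scoped ENNReal

namespace BRWAux

lemma ofReal_max_zero (a : ℝ) : ENNReal.ofReal (max a 0) = ENNReal.ofReal a := by
  rcases le_total a 0 with h | h
  · rw [max_eq_right h, ENNReal.ofReal_zero, ENNReal.ofReal_of_nonpos h]
  · rw [max_eq_left h]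

lemma tsum_eq_toReal_sub {α : Type*} (f : α → ℝ) (hf : Summable f) :
    ∑' a, f a
      = (∑' a, ENNReal.ofReal (f a)).toReal - (∑' a, ENNReal.ofReal (-f a)).toReal := by
  set fp : α → ℝ := fun a => max (f a) 0 with hfp
  set fm : α → ℝ := fun a => max (-f a) 0 with hfm
  have hfpn : ∀ a, 0 ≤ fp a := fun a => le_max_right _ _
  have hfmn : ∀ a, 0 ≤ fm a := fun a => le_max_right _ _
  have hsp : Summable fp := hf.abs.of_nonneg_of_le hfpn (fun a => max_le (le_abs_self _) (abs_nonneg _))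
  have hsm : Summable fm := hf.abs.of_nonneg_of_le hfmn
    (fun a => max_le (by rw [abs_eq_max_neg]; exact le_max_right _ _) (abs_nonneg _))
  have h1 : ∑' a, f a = (∑' a, fp a) - (∑' a, fm a) := by
    rw [← Summable.tsum_sub hsp hsm]
    exact tsum_congr fun a => (max_zero_sub_max_neg_zero_eq_self (f a)).symm
  have h2 : ∑' a, ENNReal.ofReal (f a) = ENNReal.ofReal (∑' a, fp a) := by
    rw [ENNReal.ofReal_tsum_of_nonneg hfpn hsp]
    exact tsum_congr fun a => (ofReal_max_zero (f a)).symm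
  have h3 : ∑' a, ENNReal.ofReal (-f a) = ENNReal.ofReal (∑' a, fm a) := by
    rw [ENNReal.ofReal_tsum_of_nonneg hfmn hsm]
    exact tsum_congr fun a => (ofReal_max_zero (-f a)).symm
  rw [h1, h2, h3, ENNReal.toReal_ofReal (tsum_nonneg hfpn),
    ENNReal.toReal_ofReal (tsum_nonneg hfmn)]

variable {S C : Type*}

lemma brwMeasure_eq_map [MeasurableSpace C] [MeasurableSpace S] [Countable S]
    [MeasurableSingletonClass S] (ι : S → C) (hι : Measurable ι) (w : S → ℝ≥0∞) :
    brwMeasure ι w = Measure.map ι (Measure.sum fun x => w x • Measure.dirac x) := by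
  ext s hs
  rw [Measure.map_apply hι hs, Measure.sum_apply _ (hι hs), brwMeasure, Measure.sum_apply _ hs]
  refine tsum_congr fun x => ?_
  rw [Measure.smul_apply, Measure.smul_apply, Measure.dirac_apply' _ (hι hs),
    Measure.dirac_apply' _ hs]
  by_cases h : ι x ∈ s <;> simp [Set.indicator_apply, h]

lemma sum_smul_dirac_apply_singleton [MeasurableSpace S] [Countable S]
    [MeasurableSingletonClass S] (w : S → ℝ≥0∞) (z : S) :
    (Measure.sum fun x => w x • Measure.dirac x) {z} = w z := by
  classical
  rw [Measure.sum_apply _ (measurableSet_singleton z)]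
  have : ∀ x, (w x • Measure.dirac x) {z} = if x = z then w x else 0 := by
    intro x
    rw [Measure.smul_apply, Measure.dirac_apply' _ (measurableSet_singleton z)]
    by_cases h : x = z <;> simp [Set.indicator_apply, h]
  simp_rw [this]
  exact tsum_eq_single z (fun x hx => if_neg hx) |>.trans (if_pos rfl)

lemma integral_brwMeasure [MeasurableSpace C] [MeasurableSpace S] [Countable S]
    [MeasurableSingletonClass S]
    (ι : S → C) (hι : Measurable ι) (w : S → ℝ) (hw0 : ∀ x, 0 ≤ w x)
    (hwfin : (Function.support w).Finite)
    (f : C → ℝ) (hf : Measurable f) (Kb : ℝ) (hK : ∀ c, |f c| ≤ Kb) :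
    ∫ c, f c ∂(brwMeasure ι fun x => ENNReal.ofReal (w x)) = ∑' x, w x * f (ι x) := by
  set ν : Measure S := Measure.sum fun x => ENNReal.ofReal (w x) • Measure.dirac x with hν
  have hνsing : ∀ z, ν {z} = ENNReal.ofReal (w z) := fun z =>
    sum_smul_dirac_apply_singleton _ z
  haveI : IsFiniteMeasure ν := by
    constructor
    rw [hν, Measure.sum_apply _ MeasurableSet.univ]
    have : ∀ x, (ENNReal.ofReal (w x) • Measure.dirac x) Set.univ = ENNReal.ofReal (w x) := by
      intro x; simp
    simp_rw [this]
    rw [tsum_eq_sum (s := hwfin.toFinset)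
      (fun x hx => by
        simp only [Set.Finite.mem_toFinset, Function.mem_support, not_not] at hx
        simp [hx])]
    exact ENNReal.sum_lt_top.2 fun x _ => ENNReal.ofReal_lt_top
  have hfι : Integrable (fun x => f (ι x)) ν := by
    refine (integrable_const Kb).mono' ((measurable_of_countable _).aestronglyMeasurable) ?_
    exact Filter.Eventually.of_forall fun x => by
      simpa [Real.norm_eq_abs] using hK (ι x)
  rw [brwMeasure_eq_map ι hι, integral_map hι.aemeasurable hf.aestronglyMeasurable, ← hν,
    integral_countable' hfι]
  refine tsum_congr fun x => ?_
  rw [measureReal_def, hνsing, ENNReal.toReal_ofReal (hw0 x), smul_eq_mul]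




variable {S : Type*}

noncomputable def qq (P : S → S → ℝ) (o : S) [DecidableEq S] : ℕ → S → ℝ≥0∞
  | 0 => fun z => if z = o then 1 else 0
  | (n + 1) => fun z => ∑' y, qq P o n y * ENNReal.ofReal (P y z)

lemma tsum_ofReal_P (P : S → S → ℝ) (hP0 : ∀ x y, 0 ≤ P x y)
    (hP1 : ∀ x, HasSum (fun y => P x y) 1) (y : S) :
    ∑' z, ENNReal.ofReal (P y z) = 1 := by
  rw [← ENNReal.ofReal_tsum_of_nonneg (hP0 y) (hP1 y).summable, (hP1 y).tsum_eq,
    ENNReal.ofReal_one]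

lemma qq_mass [DecidableEq S] (P : S → S → ℝ) (o : S) (hP0 : ∀ x y, 0 ≤ P x y)
    (hP1 : ∀ x, HasSum (fun y => P x y) 1) : ∀ n, ∑' z, qq P o n z = 1
  | 0 => by simp [qq]
  | (n + 1) => by
    rw [show qq P o (n+1) = fun z => ∑' y, qq P o n y * ENNReal.ofReal (P y z) from rfl]
    rw [ENNReal.tsum_comm]
    calc ∑' y, ∑' z, qq P o n y * ENNReal.ofReal (P y z)
        = ∑' y, qq P o n y * ∑' z, ENNReal.ofReal (P y z) := by
          exact tsum_congr fun y => ENNReal.tsum_mul_left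
      _ = ∑' y, qq P o n y := by
          refine tsum_congr fun y => ?_
          rw [tsum_ofReal_P P hP0 hP1 y, mul_one]
      _ = 1 := qq_mass P o hP0 hP1 n

lemma qq_le_one [DecidableEq S] (P : S → S → ℝ) (o : S) (hP0 : ∀ x y, 0 ≤ P x y)
    (hP1 : ∀ x, HasSum (fun y => P x y) 1) (n : ℕ) (z : S) : qq P o n z ≤ 1 :=
  le_trans (ENNReal.le_tsum z) (le_of_eq (qq_mass P o hP0 hP1 n))

def finSnocEquiv (S : Type*) (n : ℕ) : ((Fin n → S) × S) ≃ (Fin (n + 1) → S) where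
  toFun p := fun j => if h : (j : ℕ) < n then p.1 ⟨j, h⟩ else p.2
  invFun u := (fun i => u ⟨i, i.isLt.trans (Nat.lt_succ_self n)⟩, u ⟨n, Nat.lt_succ_self n⟩)
  left_inv := by
    rintro ⟨u, y⟩
    refine Prod.ext ?_ ?_
    · funext i
      simp [i.isLt]
    · simp
  right_inv := by
    intro u
    funext j
    dsimp only
    by_cases h : (j : ℕ) < n
    · rw [dif_pos h]
    · rw [dif_neg h]
      congr 1
      apply Fin.ext
      simp only [Fin.val_mk]
      omega

/-- extension of a finite path by a terminal value -/
def pext (n : ℕ) (u : Fin n → S) (z : S) : ℕ → S := fun i => if h : i < n then u ⟨i, h⟩ else z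

lemma marginal_eq_qq [Countable S] [DecidableEq S] [MeasurableSpace S]
    [MeasurableSingletonClass S]
    (P : S → S → ℝ) (o : S) (Q : Measure (ℕ → S))
    (hQcyl : ∀ (n : ℕ) (s : ℕ → S), Q {ω | ∀ i ≤ n, ω i = s i} =
        (if s 0 = o then 1 else 0) *
          ∏ i ∈ Finset.range n, ENNReal.ofReal (P (s i) (s (i + 1)))) :
    ∀ n z, Q {ω | ω n = z} = qq P o n z := by
  have hmeas_cyl : ∀ (n : ℕ) (s : ℕ → S), MeasurableSet {ω : ℕ → S | ∀ i ≤ n, ω i = s i} := by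
    intro n s
    have : {ω : ℕ → S | ∀ i ≤ n, ω i = s i}
        = ⋂ i ∈ Set.Iic n, (fun ω : ℕ → S => ω i) ⁻¹' {s i} := by
      ext ω; simp [Set.mem_iInter]
    rw [this]
    exact MeasurableSet.biInter (Set.to_countable _)
      fun i _ => (measurable_pi_apply i) (measurableSet_singleton _)
  have hD : ∀ (n : ℕ) (z : S), Q {ω | ω n = z}
      = ∑' u : Fin n → S, Q {ω | ∀ i ≤ n, ω i = pext n u z i} := by
    intro n z
    have hU : {ω : ℕ → S | ω n = z} = ⋃ u : Fin n → S, {ω | ∀ i ≤ n, ω i = pext n u z i} := by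
      ext ω
      constructor
      · intro hω
        refine Set.mem_iUnion.2 ⟨fun i => ω i, fun i hi => ?_⟩
        by_cases h : i < n
        · simp [pext, h]
        · have hin : i = n := Nat.le_antisymm hi (not_lt.1 h)
          subst hin
          simp only [pext, dif_neg h]
          exact hω
      · intro hω
        obtain ⟨u, hu⟩ := Set.mem_iUnion.1 hω
        have := hu n le_rfl
        simpa [pext] using this
    rw [hU, measure_iUnion ?_ (fun u => hmeas_cyl n _)]
    intro u v huv
    rw [Function.onFun, Set.disjoint_left]
    intro ω hωu hωv
    refine huv ?_
    funext i
    have h1 := hωu i (le_of_lt i.isLt)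
    have h2 := hωv i (le_of_lt i.isLt)
    rw [Set.mem_setOf_eq] at *
    have e1 : pext n u z i = u i := by simp [pext, i.isLt]
    have e2 : pext n v z i = v i := by simp [pext, i.isLt]
    rw [e1] at h1; rw [e2] at h2
    rw [← h1, h2]
  intro n
  induction n with
  | zero =>
    intro z
    have hset : {ω : ℕ → S | ω 0 = z} = {ω | ∀ i ≤ 0, ω i = (fun _ => z) i} := by
      ext ω; simp [Nat.le_zero]
    rw [hset, hQcyl 0 (fun _ => z)]
    simp [qq]
  | succ n ih =>
    intro z
    rw [hD (n + 1) z, ← (finSnocEquiv S n).tsum_eq]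
    have hterm : ∀ p : (Fin n → S) × S,
        Q {ω | ∀ i ≤ n + 1, ω i = pext (n + 1) (finSnocEquiv S n p) z i}
          = Q {ω | ∀ i ≤ n, ω i = pext n p.1 p.2 i} * ENNReal.ofReal (P p.2 z) := by
      rintro ⟨u, y⟩
      set s : ℕ → S := pext (n + 1) (finSnocEquiv S n (u, y)) z with hs
      have hsn : s n = y := by
        simp [hs, pext, finSnocEquiv, Nat.lt_succ_self n]
      have hsn1 : s (n + 1) = z := by
        simp [hs, pext]
      have hagree : ∀ i ≤ n, s i = pext n u y i := by
        intro i hi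
        by_cases h : i < n
        · simp [hs, pext, finSnocEquiv, h, Nat.lt_succ_of_lt h]
        · have : i = n := Nat.le_antisymm hi (not_lt.1 h)
          subst this
          rw [hsn]; simp [pext, h]
      have hseteq : {ω : ℕ → S | ∀ i ≤ n, ω i = s i}
          = {ω | ∀ i ≤ n, ω i = pext n u y i} := by
        ext ω
        exact ⟨fun h i hi => (h i hi).trans (hagree i hi),
          fun h i hi => (h i hi).trans (hagree i hi).symm⟩
      rw [hQcyl (n + 1) s, Finset.prod_range_succ, ← mul_assoc, ← hQcyl n s, hsn, hsn1, hseteq]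
    calc ∑' p : (Fin n → S) × S,
          Q {ω | ∀ i ≤ n + 1, ω i = pext (n + 1) (finSnocEquiv S n p) z i}
        = ∑' p : (Fin n → S) × S,
            Q {ω | ∀ i ≤ n, ω i = pext n p.1 p.2 i} * ENNReal.ofReal (P p.2 z) :=
          tsum_congr hterm
      _ = ∑' (u : Fin n → S) (y : S),
            Q {ω | ∀ i ≤ n, ω i = pext n u y i} * ENNReal.ofReal (P y z) :=
          ENNReal.tsum_prod
            (f := fun u y => Q {ω | ∀ i ≤ n, ω i = pext n u y i} * ENNReal.ofReal (P y z))
      _ = ∑' (y : S) (u : Fin n → S),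
            Q {ω | ∀ i ≤ n, ω i = pext n u y i} * ENNReal.ofReal (P y z) :=
          ENNReal.tsum_comm
      _ = ∑' y : S, (∑' u : Fin n → S, Q {ω | ∀ i ≤ n, ω i = pext n u y i})
            * ENNReal.ofReal (P y z) := tsum_congr fun y => ENNReal.tsum_mul_right
      _ = ∑' y : S, qq P o n y * ENNReal.ofReal (P y z) := by
          refine tsum_congr fun y => ?_
          rw [← hD n y, ih y]
      _ = qq P o (n + 1) z := rfl


lemma continuous_indicator_clopen {X : Type*} [TopologicalSpace X] {U : Set X}
    (h : IsClopen U) [DecidablePred (· ∈ U)] :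
    Continuous fun c => if c ∈ U then (1 : ℝ) else 0 := by
  rw [continuous_iff_continuousAt]
  intro c
  by_cases hc : c ∈ U
  · refine Filter.EventuallyEq.continuousAt (y := (1:ℝ)) ?_
    filter_upwards [h.isOpen.mem_nhds hc] with y hy
    exact if_pos hy
  · refine Filter.EventuallyEq.continuousAt (y := (0:ℝ)) ?_
    filter_upwards [h.compl.isOpen.mem_nhds hc] with y hy
    exact if_neg hy
end BRWAux


/-- Assume the martingale `⟨1, B̄ₙ⟩` is uniformly integrable (which, for a
genuine branching random walk, is the Kesten–Stigum `L log L` condition). Let `φ : ∂ → ℝ` be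
continuous with harmonic extension `h(x) := 𝐄ₓ[φ(X_∞)]`, and let `W` be the almost sure weak
limit of the random measures `B̄ₙ` on `C`. Then `E[∫_∂ φ dW] = 𝐄ₒ[φ(X_∞)]`. -/
theorem brw_expectation_identity_continuous
    {S : Type*} [Countable S] [DecidableEq S]
    (P : S → S → ℝ)
    (hP0 : ∀ x y, 0 ≤ P x y)
    (hP1 : ∀ x, HasSum (fun y => P x y) 1)
    (m : ℝ) (hm : 1 < m) (o : S)
    {Ω : Type*} {mΩ : MeasurableSpace Ω}
    (μ : Measure Ω) [IsProbabilityMeasure μ]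
    (F : Filtration ℕ mΩ)
    (B : ℕ → Ω → S → ℕ)
    (hadapt : ∀ n x, Measurable[F n] (fun ω => B n ω x))
    (hfin : ∀ n ω, (Function.support (B n ω)).Finite)
    (hint : ∀ n x, Integrable (fun ω => (B n ω x : ℝ)) μ)
    (hB0 : ∀ ω x, B 0 ω x = if x = o then 1 else 0)
    (hbranch : ∀ n x,
      μ[fun ω => (B (n + 1) ω x : ℝ)|F n]
        =ᵐ[μ] fun ω => m * ∑' y, (B n ω y : ℝ) * P y x)
    {C : Type*} [TopologicalSpace C] [CompactSpace C]
    [TopologicalSpace.MetrizableSpace C] [MeasurableSpace C] [BorelSpace C]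
    [TopologicalSpace S] [DiscreteTopology S]
    (ι : S → C) (hι : IsOpenEmbedding ι)
    [MeasurableSpace S] [MeasurableSingletonClass S]
    (Q : S → Measure (ℕ → S))
    (hQprob : ∀ x, IsProbabilityMeasure (Q x))
    (hQcyl : ∀ (x : S) (n : ℕ) (s : ℕ → S),
      Q x {ω | ∀ i ≤ n, ω i = s i} =
        (if s 0 = x then 1 else 0) *
          ∏ i ∈ Finset.range n, ENNReal.ofReal (P (s i) (s (i + 1))))
    (Xinf : (ℕ → S) → C)
    (hXmeas : Measurable Xinf)
    (hXconv : ∀ x : S, ∀ᵐ ω ∂(Q x),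
      Xinf ω ∈ (Set.range ι)ᶜ ∧ Tendsto (fun n => ι (ω n)) atTop (𝓝 (Xinf ω)))
    (hUI : UniformIntegrable (fun n ω => (m ^ n)⁻¹ * ∑' x, (B n ω x : ℝ)) 1 μ)
    (W : Ω → Measure C) (hWfin : ∀ ω, IsFiniteMeasure (W ω))
    (hWconv : ∀ᵐ ω ∂μ, ∀ f : BoundedContinuousFunction C ℝ,
      Tendsto
        (fun n => ∫ c, f c
          ∂(brwMeasure ι fun x => ENNReal.ofReal ((m ^ n)⁻¹ * (B n ω x : ℝ))))
        atTop (𝓝 (∫ c, f c ∂(W ω))))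
    (φ : C → ℝ) (hφ : ContinuousOn φ (Set.range ι)ᶜ) :
    ∫ ω, (∫ c in (Set.range ι)ᶜ, φ c ∂(W ω)) ∂μ = ∫ ω', φ (Xinf ω') ∂(Q o) := by
  classical
  have hm0 : (0:ℝ) < m := lt_trans one_pos hm
  have hmn : ∀ n : ℕ, (0:ℝ) < m ^ n := fun n => pow_pos hm0 n
  haveI := hQprob o
  letI : MetricSpace C := TopologicalSpace.metrizableSpaceMetric C
  -- Tietze extension of φ
  have hclosed : IsClosed (Set.range ι)ᶜ := hι.isOpen_range.isClosed_compl
  obtain ⟨gc, hgc⟩ := ContinuousMap.exists_restrict_eq (Y := ℝ) hclosed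
    ⟨_, hφ.restrict⟩
  have hgφ : ∀ c ∈ (Set.range ι)ᶜ, gc c = φ c := by
    intro c hc
    simpa using DFunLike.congr_fun hgc ⟨c, hc⟩
  set gB : BoundedContinuousFunction C ℝ := BoundedContinuousFunction.mkOfCompact gc with hgBdef
  set Kb : ℝ := ‖gB‖ with hKbdef
  have hKb0 : 0 ≤ Kb := norm_nonneg _
  have hKbound : ∀ c, |gc c| ≤ Kb := fun c => by
    have := gB.norm_coe_le_norm c
    simpa [hgBdef, hKbdef, Real.norm_eq_abs] using this
  -- measurability of the configuration
  have hBmeas : ∀ n x, Measurable fun ω => B n ω x := fun n x =>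
    (hadapt n x).mono (F.le n) le_rfl
  have hBmeasE : ∀ n x, Measurable fun ω => ((B n ω x : ℕ) : ℝ≥0∞) := fun n x =>
    (measurable_of_countable _).comp (hBmeas n x)
  have hBmeasR : ∀ n x, Measurable fun ω => ((B n ω x : ℕ) : ℝ) := fun n x =>
    (measurable_of_countable _).comp (hBmeas n x)
  have hιmeas : Measurable ι := measurable_of_countable ι
  -- summability facts
  have hsupp : ∀ (n : ℕ) (ω : Ω) (f : S → ℝ),
      (∀ x, B n ω x = 0 → f x = 0) → Summable f := by
    intro n ω f hf
    refine summable_of_ne_finset_zero (s := (hfin n ω).toFinset) fun x hx => ?_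
    simp only [Set.Finite.mem_toFinset, Function.mem_support, not_not] at hx
    exact hf x hx
  -- the mean recursion : E side
  have hA : ∀ n z, ∫⁻ ω, ((B n ω z : ℕ) : ℝ≥0∞) ∂μ
      = ENNReal.ofReal (m ^ n) * BRWAux.qq P o n z := by
    intro n
    induction n with
    | zero =>
      intro z
      have hpt : ∀ ω : Ω, ((B 0 ω z : ℕ) : ℝ≥0∞) = (if z = o then 1 else 0) := by
        intro ω; rw [hB0 ω z]; by_cases h : z = o <;> simp [h]
      calc ∫⁻ ω, ((B 0 ω z : ℕ) : ℝ≥0∞) ∂μ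
          = ∫⁻ _ω, (if z = o then (1:ℝ≥0∞) else 0) ∂μ := lintegral_congr hpt
        _ = (if z = o then (1:ℝ≥0∞) else 0) := by rw [lintegral_const]; simp
        _ = ENNReal.ofReal (m ^ 0) * BRWAux.qq P o 0 z := by
            simp [BRWAux.qq]
    | succ n ih =>
      intro z
      have hsum1 : ∀ ω : Ω, Summable fun y => ((B n ω y : ℕ) : ℝ) * P y z := fun ω =>
        hsupp n ω _ fun y hy => by rw [hy]; simp
      have hR : Integrable (fun ω => m * ∑' y, ((B n ω y : ℕ) : ℝ) * P y z) μ :=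
        integrable_condExp.congr (hbranch n z)
      have hRnn : 0 ≤ᵐ[μ] fun ω => m * ∑' y, ((B n ω y : ℕ) : ℝ) * P y z :=
        Filter.Eventually.of_forall fun ω => mul_nonneg hm0.le
          (tsum_nonneg fun y => mul_nonneg (Nat.cast_nonneg _) (hP0 y z))
      have h1 : ∫ ω, ((B (n+1) ω z : ℕ) : ℝ) ∂μ
          = ∫ ω, m * ∑' y, ((B n ω y : ℕ) : ℝ) * P y z ∂μ := by
        rw [← integral_condExp (F.le n) (f := fun ω => ((B (n+1) ω z : ℕ) : ℝ))]
        exact integral_congr_ae (hbranch n z)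
      have hL : ∫⁻ ω, ((B (n+1) ω z : ℕ) : ℝ≥0∞) ∂μ
          = ENNReal.ofReal (∫ ω, ((B (n+1) ω z : ℕ) : ℝ) ∂μ) := by
        rw [ofReal_integral_eq_lintegral_ofReal (hint (n+1) z)
          (Filter.Eventually.of_forall fun ω => Nat.cast_nonneg _)]
        exact lintegral_congr fun ω => by rw [ENNReal.ofReal_natCast]
      have hptwise : ∀ ω : Ω, ENNReal.ofReal (m * ∑' y, ((B n ω y : ℕ) : ℝ) * P y z)
          = ENNReal.ofReal m * ∑' y, ((B n ω y : ℕ) : ℝ≥0∞) * ENNReal.ofReal (P y z) := by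
        intro ω
        rw [ENNReal.ofReal_mul hm0.le,
          ENNReal.ofReal_tsum_of_nonneg
            (fun y => mul_nonneg (Nat.cast_nonneg _) (hP0 y z)) (hsum1 ω)]
        congr 1
        exact tsum_congr fun y => by
          rw [ENNReal.ofReal_mul (Nat.cast_nonneg _), ENNReal.ofReal_natCast]
      have hRl : ∫⁻ ω, ENNReal.ofReal m
            * ∑' y, ((B n ω y : ℕ) : ℝ≥0∞) * ENNReal.ofReal (P y z) ∂μ
          = ENNReal.ofReal (m ^ (n+1)) * BRWAux.qq P o (n+1) z := by
        rw [lintegral_const_mul _ (Measurable.ennreal_tsum fun y => (hBmeasE n y).mul_const _),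
          lintegral_tsum fun y => ((hBmeasE n y).mul_const _).aemeasurable]
        have hterm : ∀ y, ∫⁻ ω, ((B n ω y : ℕ) : ℝ≥0∞) * ENNReal.ofReal (P y z) ∂μ
            = ENNReal.ofReal (m ^ n) * (BRWAux.qq P o n y * ENNReal.ofReal (P y z)) := by
          intro y
          rw [lintegral_mul_const _ (hBmeasE n y), ih y, mul_assoc]
        simp_rw [hterm]
        rw [ENNReal.tsum_mul_left, ← mul_assoc, ← ENNReal.ofReal_mul hm0.le, ← pow_succ']
        rfl
      rw [hL, h1, ofReal_integral_eq_lintegral_ofReal hR hRnn, lintegral_congr hptwise, hRl]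
  have hqmass : ∀ n, ∑' z, BRWAux.qq P o n z = 1 := BRWAux.qq_mass P o hP0 hP1
  have hqle : ∀ n z, BRWAux.qq P o n z ≤ 1 := BRWAux.qq_le_one P o hP0 hP1
  have hIntB : ∀ n z, ∫ ω, ((B n ω z : ℕ) : ℝ) ∂μ = m ^ n * (BRWAux.qq P o n z).toReal := by
    intro n z
    have h2 : ENNReal.ofReal (∫ ω, ((B n ω z : ℕ) : ℝ) ∂μ)
        = ENNReal.ofReal (m ^ n) * BRWAux.qq P o n z := by
      rw [ofReal_integral_eq_lintegral_ofReal (hint n z)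
        (Filter.Eventually.of_forall fun ω => Nat.cast_nonneg _)]
      rw [lintegral_congr fun ω => ENNReal.ofReal_natCast (B n ω z)]
      exact hA n z
    have h3 := congrArg ENNReal.toReal h2
    rw [ENNReal.toReal_ofReal (integral_nonneg fun ω => Nat.cast_nonneg _)] at h3
    rw [h3, ENNReal.toReal_mul, ENNReal.toReal_ofReal (hmn n).le]
  have hVlint : ∀ n x, ∫⁻ ω, ENNReal.ofReal ((m ^ n)⁻¹ * ((B n ω x : ℕ) : ℝ)) ∂μ
      = BRWAux.qq P o n x := by
    intro n x
    have hpt : ∀ ω : Ω, ENNReal.ofReal ((m ^ n)⁻¹ * ((B n ω x : ℕ) : ℝ))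
        = ENNReal.ofReal ((m ^ n)⁻¹) * ((B n ω x : ℕ) : ℝ≥0∞) := fun ω => by
      rw [ENNReal.ofReal_mul (inv_nonneg.2 (hmn n).le), ENNReal.ofReal_natCast]
    rw [lintegral_congr hpt, lintegral_const_mul _ (hBmeasE n x), hA n x, ← mul_assoc,
      ← ENNReal.ofReal_mul (inv_nonneg.2 (hmn n).le), inv_mul_cancel₀ (hmn n).ne',
      ENNReal.ofReal_one, one_mul]
  have hQmarg : ∀ n z, Q o {ω' | ω' n = z} = BRWAux.qq P o n z :=
    BRWAux.marginal_eq_qq P o (Q o) (fun n s => hQcyl o n s)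
  -- the random variables Iₙ
  set I : ℕ → Ω → ℝ := fun n ω => ∑' x, ((m ^ n)⁻¹ * ((B n ω x : ℕ) : ℝ)) * gc (ι x) with hIdef
  have hwnn : ∀ (n : ℕ) (ω : Ω) (x : S), 0 ≤ (m ^ n)⁻¹ * ((B n ω x : ℕ) : ℝ) :=
    fun n ω x => mul_nonneg (inv_nonneg.2 (hmn n).le) (Nat.cast_nonneg _)
  have hwfin' : ∀ (n : ℕ) (ω : Ω),
      (Function.support fun x => (m ^ n)⁻¹ * ((B n ω x : ℕ) : ℝ)).Finite := by
    intro n ω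
    refine (hfin n ω).subset fun x hx => ?_
    simp only [Function.mem_support] at *
    intro h0
    exact hx (by rw [h0]; simp)
  have hIeq : ∀ (n : ℕ) (ω : Ω),
      ∫ c, gc c ∂(brwMeasure ι fun x => ENNReal.ofReal ((m ^ n)⁻¹ * (B n ω x : ℝ)))
        = I n ω :=
    fun n ω => BRWAux.integral_brwMeasure ι hιmeas _ (hwnn n ω) (hwfin' n ω) gc
      gc.continuous.measurable Kb hKbound
  set G : Ω → ℝ := fun ω => ∫ c, gc c ∂(W ω) with hGdef
  have haeI : ∀ᵐ ω ∂μ, Tendsto (fun n => I n ω) atTop (𝓝 (G ω)) := by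
    filter_upwards [hWconv] with ω hω
    have h1 := hω gB
    simp only [hgBdef, BoundedContinuousFunction.mkOfCompact_apply] at h1
    exact h1.congr fun n => hIeq n ω
  have hImeas : ∀ n, Measurable (I n) := by
    intro n
    have hrep : I n = fun ω =>
        (∑' x, ENNReal.ofReal (((m ^ n)⁻¹ * ((B n ω x : ℕ) : ℝ)) * gc (ι x))).toReal
        - (∑' x, ENNReal.ofReal (-(((m ^ n)⁻¹ * ((B n ω x : ℕ) : ℝ)) * gc (ι x)))).toReal := by
      funext ω
      exact BRWAux.tsum_eq_toReal_sub _
        (hsupp n ω _ fun x hx => by rw [hx]; simp)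
    rw [hrep]
    refine Measurable.sub ?_ ?_
    · exact (Measurable.ennreal_tsum fun x => ENNReal.measurable_ofReal.comp
        (((hBmeasR n x).const_mul _).mul_const _)).ennreal_toReal
    · exact (Measurable.ennreal_tsum fun x => ENNReal.measurable_ofReal.comp
        (((hBmeasR n x).const_mul _).mul_const _).neg).ennreal_toReal
  set htot : ℕ → Ω → ℝ := fun n ω => (m ^ n)⁻¹ * ∑' x, ((B n ω x : ℕ) : ℝ) with hhtotdef
  have hIbound : ∀ n ω, ‖I n ω‖ ≤ Kb * htot n ω := by
    intro n ω
    have hs1 : Summable fun x => ((m ^ n)⁻¹ * ((B n ω x : ℕ) : ℝ)) * gc (ι x) :=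
      hsupp n ω _ fun x hx => by rw [hx]; simp
    have hs2 : Summable fun x => ((m ^ n)⁻¹ * ((B n ω x : ℕ) : ℝ)) * Kb :=
      hsupp n ω _ fun x hx => by rw [hx]; simp
    have hsB : Summable fun x => ((B n ω x : ℕ) : ℝ) :=
      hsupp n ω _ fun x hx => by rw [hx]; simp
    calc ‖I n ω‖ ≤ ∑' x, ‖((m ^ n)⁻¹ * ((B n ω x : ℕ) : ℝ)) * gc (ι x)‖ :=
        norm_tsum_le_tsum_norm hs1.abs
      _ ≤ ∑' x, ((m ^ n)⁻¹ * ((B n ω x : ℕ) : ℝ)) * Kb := by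
        refine Summable.tsum_le_tsum (fun x => ?_) hs1.abs hs2
        rw [Real.norm_eq_abs, abs_mul, abs_of_nonneg (hwnn n ω x)]
        exact mul_le_mul_of_nonneg_left (hKbound (ι x)) (hwnn n ω x)
      _ = Kb * htot n ω := by
        rw [tsum_mul_right, tsum_mul_left, mul_comm]
  obtain ⟨hUIm, hUIu, CUI, hCUI⟩ := hUI
  have hhmem : ∀ n, MemLp (htot n) 1 μ := fun n =>
    ⟨hUIm n, lt_of_le_of_lt (hCUI n) ENNReal.coe_lt_top⟩
  have hhint : ∀ n, Integrable (htot n) μ := fun n => memLp_one_iff_integrable.mp (hhmem n)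
  have hIint : ∀ n, Integrable (I n) μ := fun n =>
    ((hhint n).const_mul Kb).mono' (hImeas n).aestronglyMeasurable
      (Filter.Eventually.of_forall fun ω => hIbound n ω)
  have hIunif : UnifIntegrable I 1 μ := by
    intro ε hε
    obtain ⟨δ, hδ, hbound⟩ := hUIu (ε := ε / (Kb + 1)) (div_pos hε (by linarith))
    refine ⟨δ, hδ, fun n s hs hμs => ?_⟩
    have hKs : ∀ (f : Ω → ℝ), eLpNorm (fun ω => Kb * f ω) 1 μ
        = (‖Kb‖₊ : ℝ≥0∞) * eLpNorm f 1 μ := by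
      intro f
      have := eLpNorm_const_smul (c := Kb) (f := f) (p := (1:ℝ≥0∞)) (μ := μ)
      exact this
    calc eLpNorm (s.indicator (I n)) 1 μ
        ≤ eLpNorm (s.indicator fun ω => Kb * htot n ω) 1 μ := by
          refine eLpNorm_mono fun ω => ?_
          by_cases hωs : ω ∈ s
          · rw [Set.indicator_of_mem hωs, Set.indicator_of_mem hωs]
            exact (hIbound n ω).trans (le_abs_self _)
          · simp [Set.indicator_of_notMem hωs]
      _ = eLpNorm (fun ω => Kb * s.indicator (htot n) ω) 1 μ := by
          congr 1
          funext ω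
          by_cases hωs : ω ∈ s <;> simp [Set.indicator, hωs]
      _ = (‖Kb‖₊ : ℝ≥0∞) * eLpNorm (s.indicator (htot n)) 1 μ := hKs _
      _ ≤ (‖Kb‖₊ : ℝ≥0∞) * ENNReal.ofReal (ε / (Kb + 1)) :=
          mul_le_mul_right (hbound n s hs hμs) _
      _ ≤ ENNReal.ofReal ε := by
          rw [← ENNReal.ofReal_coe_nnreal, coe_nnnorm, Real.norm_eq_abs, abs_of_nonneg hKb0,
            ← ENNReal.ofReal_mul hKb0]
          refine ENNReal.ofReal_le_ofReal ?_
          have h1 : Kb * (ε / (Kb + 1)) ≤ (Kb + 1) * (ε / (Kb + 1)) := by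
            have : 0 ≤ ε / (Kb + 1) := le_of_lt (div_pos hε (by linarith))
            nlinarith
          have h2 : (Kb + 1) * (ε / (Kb + 1)) = ε := by
            field_simp
          linarith
  have hGaesm : AEStronglyMeasurable G μ :=
    aestronglyMeasurable_of_tendsto_ae atTop (fun n => (hImeas n).aestronglyMeasurable) haeI
  have hGmem : MemLp G 1 μ := by
    refine ⟨hGaesm, ?_⟩
    have hle := MeasureTheory.Lp.eLpNorm_lim_le_liminf_eLpNorm (p := (1:ℝ≥0∞))
      (fun n => (hImeas n).aestronglyMeasurable) G haeI
    refine lt_of_le_of_lt hle ?_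
    have hKs : ∀ (f : Ω → ℝ), eLpNorm (fun ω => Kb * f ω) 1 μ
        = (‖Kb‖₊ : ℝ≥0∞) * eLpNorm f 1 μ := by
      intro f
      have := eLpNorm_const_smul (c := Kb) (f := f) (p := (1:ℝ≥0∞)) (μ := μ)
      exact this
    have hbd : ∀ n, eLpNorm (I n) 1 μ ≤ (‖Kb‖₊ : ℝ≥0∞) * (CUI : ℝ≥0∞) := by
      intro n
      calc eLpNorm (I n) 1 μ ≤ eLpNorm (fun ω => Kb * htot n ω) 1 μ := by
            refine eLpNorm_mono fun ω => ?_
            exact (hIbound n ω).trans (le_abs_self _)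
        _ = (‖Kb‖₊ : ℝ≥0∞) * eLpNorm (htot n) 1 μ := hKs _
        _ ≤ (‖Kb‖₊ : ℝ≥0∞) * (CUI : ℝ≥0∞) := mul_le_mul_right (hCUI n) _
    have hliminf : (atTop.liminf fun n => eLpNorm (I n) 1 μ)
        ≤ (‖Kb‖₊ : ℝ≥0∞) * (CUI : ℝ≥0∞) := by
      have := Filter.liminf_le_liminf (f := (atTop : Filter ℕ)) (Filter.Eventually.of_forall hbd)
        (by isBoundedDefault) (by isBoundedDefault)
      simpa using this
    exact lt_of_le_of_lt hliminf
      (ENNReal.mul_lt_top ENNReal.coe_lt_top ENNReal.coe_lt_top)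
  have hvitali := tendsto_Lp_finite_of_tendsto_ae (μ := μ) (p := 1) le_rfl ENNReal.one_ne_top
    (fun n => (hImeas n).aestronglyMeasurable) hGmem hIunif haeI
  have hGint : Integrable G μ := memLp_one_iff_integrable.mp hGmem
  have hIntTendsto : Tendsto (fun n => ∫ ω, I n ω ∂μ) atTop (𝓝 (∫ ω, G ω ∂μ)) :=
    tendsto_integral_of_L1' G hGint.aestronglyMeasurable (Filter.Eventually.of_forall hIint) hvitali
  -- identification of the means
  have hEI : ∀ n, ∫ ω, I n ω ∂μ = ∑' x, (BRWAux.qq P o n x).toReal * gc (ι x) := by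
    intro n
    have hmeas' : ∀ x : S, AEStronglyMeasurable
        (fun ω => ((m ^ n)⁻¹ * ((B n ω x : ℕ) : ℝ)) * gc (ι x)) μ :=
      fun x => (((hBmeasR n x).const_mul _).mul_const _).aestronglyMeasurable
    have hlb : ∀ x : S, ∫⁻ ω, ‖((m ^ n)⁻¹ * ((B n ω x : ℕ) : ℝ)) * gc (ι x)‖₊ ∂μ
        ≤ BRWAux.qq P o n x * ENNReal.ofReal Kb := by
      intro x
      have hpt : ∀ ω : Ω, (‖((m ^ n)⁻¹ * ((B n ω x : ℕ) : ℝ)) * gc (ι x)‖₊ : ℝ≥0∞)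
          ≤ ENNReal.ofReal ((m ^ n)⁻¹ * ((B n ω x : ℕ) : ℝ)) * ENNReal.ofReal Kb := by
        intro ω
        rw [← ENNReal.ofReal_coe_nnreal, coe_nnnorm, Real.norm_eq_abs, abs_mul,
          abs_of_nonneg (hwnn n ω x), ← ENNReal.ofReal_mul (hwnn n ω x)]
        exact ENNReal.ofReal_le_ofReal
          (mul_le_mul_of_nonneg_left (hKbound (ι x)) (hwnn n ω x))
      calc ∫⁻ ω, ‖((m ^ n)⁻¹ * ((B n ω x : ℕ) : ℝ)) * gc (ι x)‖₊ ∂μ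
          ≤ ∫⁻ ω, ENNReal.ofReal ((m ^ n)⁻¹ * ((B n ω x : ℕ) : ℝ))
              * ENNReal.ofReal Kb ∂μ := lintegral_mono hpt
        _ = BRWAux.qq P o n x * ENNReal.ofReal Kb := by
            rw [lintegral_mul_const _
              (Measurable.ennreal_ofReal ((hBmeasR n x).const_mul _)), hVlint n x]
    have hne : (∑' x, ∫⁻ ω, ‖((m ^ n)⁻¹ * ((B n ω x : ℕ) : ℝ)) * gc (ι x)‖₊ ∂μ) ≠ ⊤ := by
      refine ne_top_of_le_ne_top ?_ (ENNReal.tsum_le_tsum hlb)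
      rw [ENNReal.tsum_mul_right, hqmass n, one_mul]
      exact ENNReal.ofReal_ne_top
    have := integral_tsum hmeas' hne
    simp only [hIdef]
    rw [this]
    refine tsum_congr fun x => ?_
    rw [integral_mul_const, show (fun ω => (m ^ n)⁻¹ * ((B n ω x : ℕ) : ℝ))
        = fun ω => (m ^ n)⁻¹ * ((B n ω x : ℕ) : ℝ) from rfl, integral_const_mul, hIntB n x,
      ← mul_assoc, inv_mul_cancel₀ (hmn n).ne', one_mul]
  have hQI : ∀ n, ∫ ω', gc (ι (ω' n)) ∂(Q o) = ∑' x, (BRWAux.qq P o n x).toReal * gc (ι x) := by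
    intro n
    have hev : Measurable fun ω' : ℕ → S => ω' n := measurable_pi_apply n
    have hmap : ∫ ω', gc (ι (ω' n)) ∂(Q o)
        = ∫ z, gc (ι z) ∂(Measure.map (fun ω' : ℕ → S => ω' n) (Q o)) :=
      (integral_map hev.aemeasurable
        (measurable_of_countable (fun z : S => gc (ι z))).aestronglyMeasurable).symm
    rw [hmap]
    haveI : IsProbabilityMeasure (Measure.map (fun ω' : ℕ → S => ω' n) (Q o)) :=
      Measure.isProbabilityMeasure_map hev.aemeasurable
    have hintg : Integrable (fun z : S => gc (ι z))
        (Measure.map (fun ω' : ℕ → S => ω' n) (Q o)) := by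
      refine (integrable_const Kb).mono'
        (measurable_of_countable (fun z : S => gc (ι z))).aestronglyMeasurable ?_
      exact Filter.Eventually.of_forall fun z => by
        simpa [Real.norm_eq_abs] using hKbound (ι z)
    rw [integral_countable' hintg]
    refine tsum_congr fun z => ?_
    rw [measureReal_def, Measure.map_apply hev (measurableSet_singleton z)]
    have hpre : (fun ω' : ℕ → S => ω' n) ⁻¹' {z} = {ω' | ω' n = z} := rfl
    rw [hpre, hQmarg n z, smul_eq_mul]
  -- convergence on the Markov chain side
  have hφg : ∫ ω', φ (Xinf ω') ∂(Q o) = ∫ ω', gc (Xinf ω') ∂(Q o) := by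
    refine integral_congr_ae ?_
    filter_upwards [hXconv o] with ω' hω'
    exact (hgφ _ hω'.1).symm
  have hJlim : Tendsto (fun n => ∫ ω', gc (ι (ω' n)) ∂(Q o)) atTop
      (𝓝 (∫ ω', gc (Xinf ω') ∂(Q o))) := by
    refine tendsto_integral_of_dominated_convergence (bound := fun _ => Kb) ?_ ?_ ?_ ?_
    · intro n
      exact ((measurable_of_countable (fun z => gc (ι z))).comp
        (measurable_pi_apply n)).aestronglyMeasurable
    · exact integrable_const Kb
    · intro n
      exact Filter.Eventually.of_forall fun ω' => by
        simpa [Real.norm_eq_abs] using hKbound (ι (ω' n))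
    · filter_upwards [hXconv o] with ω' hω'
      exact (gc.continuous.tendsto _).comp hω'.2
  -- the limit measure puts no mass on ι(S)
  have hWnull : ∀ᵐ ω ∂μ, (W ω) (Set.range ι) = 0 := by
    have hpoint : ∀ x : S, ∀ᵐ ω ∂μ, (W ω) {ι x} = 0 := by
      intro x
      have hclopen : IsClopen ({ι x} : Set C) := by
        constructor
        · exact isClosed_singleton
        · have : ({ι x} : Set C) = ι '' {x} := by rw [Set.image_singleton]
          rw [this]
          exact hι.isOpenMap _ (isOpen_discrete _)
      set find : C → ℝ := fun c => if c ∈ ({ι x} : Set C) then 1 else 0 with hfinddef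
      have hfcont : Continuous find := BRWAux.continuous_indicator_clopen hclopen
      set fB : BoundedContinuousFunction C ℝ :=
        BoundedContinuousFunction.mkOfCompact ⟨find, hfcont⟩ with hfBdef
      have hfB : ∀ c, fB c = find c := fun c => rfl
      have hfBound : ∀ c, |find c| ≤ 1 := fun c => by
        simp only [hfinddef]
        split_ifs <;> simp
      have hae : ∀ᵐ ω ∂μ, Tendsto (fun n => (m ^ n)⁻¹ * ((B n ω x : ℕ) : ℝ)) atTop
          (𝓝 ((W ω {ι x}).toReal)) := by
        filter_upwards [hWconv] with ω hω
        have h1 := hω fB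
        have h2 : ∀ n, ∫ c, fB c
            ∂(brwMeasure ι fun y => ENNReal.ofReal ((m ^ n)⁻¹ * (B n ω y : ℝ)))
            = (m ^ n)⁻¹ * ((B n ω x : ℕ) : ℝ) := by
          intro n
          have := BRWAux.integral_brwMeasure ι hιmeas _ (hwnn n ω) (hwfin' n ω) find
            hfcont.measurable 1 hfBound
          simp only [← hfB] at this
          rw [this]
          have hterm : ∀ y, ((m ^ n)⁻¹ * ((B n ω y : ℕ) : ℝ)) * fB (ι y)
              = if y = x then (m ^ n)⁻¹ * ((B n ω x : ℕ) : ℝ) else 0 := by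
            intro y
            simp only [hfB, hfinddef, Set.mem_singleton_iff]
            by_cases h : y = x
            · subst h; simp
            · have hne : ι y ≠ ι x := fun hc => h (hι.injective hc)
              simp [hne, h]
          simp_rw [hterm]
          exact tsum_ite_eq x _
        have h3 : ∫ c, fB c ∂(W ω) = (W ω {ι x}).toReal := by
          have hindic : ⇑fB = Set.indicator ({ι x} : Set C) (fun _ => (1:ℝ)) := by
            funext c
            simp only [hfB, hfinddef, Set.mem_singleton_iff, Set.indicator_apply]
          rw [hindic, integral_indicator_const (1:ℝ) (measurableSet_singleton _)]
          simp [measureReal_def]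
        rw [h3] at h1
        exact h1.congr h2
      set L : Ω → ℝ≥0∞ :=
        fun ω => atTop.liminf fun n => ENNReal.ofReal ((m ^ n)⁻¹ * ((B n ω x : ℕ) : ℝ))
        with hLdef
      have hLmeas : Measurable L :=
        Measurable.liminf fun n => Measurable.ennreal_ofReal ((hBmeasR n x).const_mul _)
      have haeL : ∀ᵐ ω ∂μ, W ω {ι x} = L ω := by
        filter_upwards [hae] with ω hω
        have h4 : Tendsto (fun n => ENNReal.ofReal ((m ^ n)⁻¹ * ((B n ω x : ℕ) : ℝ))) atTop
            (𝓝 (ENNReal.ofReal ((W ω {ι x}).toReal))) :=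
          (ENNReal.continuous_ofReal.tendsto _).comp hω
        rw [ENNReal.ofReal_toReal (measure_ne_top (W ω) _)] at h4
        exact h4.liminf_eq.symm
      have hq0 : Tendsto (fun n => BRWAux.qq P o n x) atTop (𝓝 0) := by
        have hmset : ∀ n : ℕ, MeasurableSet {ω' : ℕ → S | ω' n = x} := by
          intro n
          have hpre : {ω' : ℕ → S | ω' n = x} = (fun ω' : ℕ → S => ω' n) ⁻¹' {x} := rfl
          rw [hpre]
          exact (measurable_pi_apply n) (measurableSet_singleton x)
        have hrw : ∀ n : ℕ, BRWAux.qq P o n x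
            = ∫⁻ ω', Set.indicator {ω' : ℕ → S | ω' n = x} (fun _ => (1:ℝ≥0∞)) ω' ∂(Q o) := by
          intro n
          rw [lintegral_indicator (hmset n), setLIntegral_one, hQmarg n x]
        have hdct := tendsto_lintegral_of_dominated_convergence (μ := Q o)
          (F := fun n ω' => Set.indicator {ω' : ℕ → S | ω' n = x} (fun _ => (1:ℝ≥0∞)) ω')
          (f := fun _ => 0) (bound := fun _ => 1)
          (fun n => measurable_const.indicator (hmset n))
          (fun n => Filter.Eventually.of_forall fun ω' => Set.indicator_le_self' (by simp) ω')
          (by simp)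
          ?_
        · have : Tendsto (fun n => BRWAux.qq P o n x) atTop (𝓝 (∫⁻ _, (0:ℝ≥0∞) ∂(Q o))) := by
            refine Tendsto.congr (fun n => (hrw n).symm) hdct
          simpa using this
        · filter_upwards [hXconv o] with ω' hω'
          have hne : Xinf ω' ≠ ι x := fun hc => hω'.1 ⟨x, hc.symm⟩
          have hopen : IsOpen ({ι x}ᶜ : Set C) := isClosed_singleton.isOpen_compl
          have hmem : Xinf ω' ∈ ({ι x}ᶜ : Set C) := by simpa using hne
          have hev : ∀ᶠ n in atTop, ι (ω' n) ∈ ({ι x}ᶜ : Set C) :=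
            hω'.2.eventually (hopen.eventually_mem hmem)
          refine tendsto_nhds_of_eventually_eq ?_
          filter_upwards [hev] with n hn
          have : ω' n ≠ x := fun hc => hn (by rw [hc]; simp)
          simp [Set.indicator_apply, this]
      have hL0 : ∫⁻ ω, L ω ∂μ = 0 := by
        have hle : ∫⁻ ω, L ω ∂μ ≤ atTop.liminf
            fun n => ∫⁻ ω, ENNReal.ofReal ((m ^ n)⁻¹ * ((B n ω x : ℕ) : ℝ)) ∂μ :=
          lintegral_liminf_le fun n => Measurable.ennreal_ofReal ((hBmeasR n x).const_mul _)
        have heq : ∀ n : ℕ, ∫⁻ ω, ENNReal.ofReal ((m ^ n)⁻¹ * ((B n ω x : ℕ) : ℝ)) ∂μ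
            = BRWAux.qq P o n x := fun n => hVlint n x
        simp_rw [heq] at hle
        rw [hq0.liminf_eq] at hle
        exact le_antisymm hle (by simp)
      have hLz : ∀ᵐ ω ∂μ, L ω = 0 := (lintegral_eq_zero_iff hLmeas).mp hL0
      filter_upwards [haeL, hLz] with ω h1 h2
      rw [h1, h2]
    filter_upwards [ae_all_iff.2 hpoint] with ω hω
    have hrange : Set.range ι = ⋃ x, ({ι x} : Set C) := by
      ext c; simp
    rw [hrange]
    exact measure_iUnion_null hω
  -- final assembly
  have hLHS : ∫ ω, (∫ c in (Set.range ι)ᶜ, φ c ∂(W ω)) ∂μ = ∫ ω, G ω ∂μ := by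
    refine integral_congr_ae ?_
    filter_upwards [hWnull] with ω hω
    haveI := hWfin ω
    have h1 : ∫ c in (Set.range ι)ᶜ, φ c ∂(W ω) = ∫ c in (Set.range ι)ᶜ, gc c ∂(W ω) :=
      (setIntegral_congr_fun hclosed.measurableSet fun c hc => hgφ c hc).symm
    have hgint : Integrable (fun c => gc c) (W ω) := by
      refine (integrable_const Kb).mono' gc.continuous.measurable.aestronglyMeasurable ?_
      exact Filter.Eventually.of_forall fun c => by
        simpa [Real.norm_eq_abs] using hKbound c
    have h2 : ∫ c in (Set.range ι)ᶜ, gc c ∂(W ω) = ∫ c, gc c ∂(W ω) := by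
      have hsplit := integral_add_compl hι.isOpen_range.measurableSet hgint
      have hzero : ∫ c in Set.range ι, gc c ∂(W ω) = 0 := by
        rw [Measure.restrict_eq_zero.mpr hω]
        exact integral_zero_measure _
      rw [← hsplit, hzero, zero_add]
    rw [h1, h2]
  rw [hLHS, hφg]
  have hJ : ∀ n, ∫ ω, I n ω ∂μ = ∫ ω', gc (ι (ω' n)) ∂(Q o) :=
    fun n => (hEI n).trans (hQI n).symm
  exact tendsto_nhds_unique (hIntTendsto.congr hJ) hJlim
end

section
/- Assume in addition that the martingale (⟨1, B̄_n⟩)_{n≥0} is uniformly integrable (for a genuine branching random walk with offspring distribution μ of mean m > 1 this holds, by the Kesten–Stigum theorem, exactly when Σ_n μ(n) n log n < ∞). Let W be the almost sure weak limit of the sequence of random finite measures (B̄_n)_{n≥0} on C. Then for every Borel set A ⊆ C one has E[W(A)] = 𝐏_o(X_∞ ∈ A); that is, the expectation measure of W equals the law of X_∞ under 𝐏_o. -/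
open MeasureTheory Filter Topology

open scoped ENNReal NNReal

set_option linter.unusedSectionVars false

section Aux

variable {S : Type*} [Countable S] [DecidableEq S]

/-- n-step transition probabilities in `ℝ≥0∞`, started at `o`. -/
noncomputable def peAux (P : S → S → ℝ) (o : S) : ℕ → S → ENNReal
  | 0 => fun x => if x = o then 1 else 0
  | n + 1 => fun x => ∑' y, peAux P o n y * ENNReal.ofReal (P y x)

lemma ofReal_tsum_P_eq_one {P : S → S → ℝ} (hP0 : ∀ x y, 0 ≤ P x y)
    (hP1 : ∀ x, HasSum (fun y => P x y) 1) (x : S) :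
    ∑' y, ENNReal.ofReal (P x y) = 1 := by
  rw [← ENNReal.ofReal_tsum_of_nonneg (hP0 x) (hP1 x).summable, (hP1 x).tsum_eq,
    ENNReal.ofReal_one]

lemma peAux_tsum_eq_one {P : S → S → ℝ} (hP0 : ∀ x y, 0 ≤ P x y)
    (hP1 : ∀ x, HasSum (fun y => P x y) 1) (o : S) :
    ∀ n, ∑' x, peAux P o n x = 1
  | 0 => by
    simp only [peAux]
    rw [tsum_eq_single o (fun x hx => if_neg hx)]
    simp
  | n + 1 => by
    simp only [peAux]
    rw [ENNReal.tsum_comm]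
    calc ∑' y, ∑' x, peAux P o n y * ENNReal.ofReal (P y x)
        = ∑' y, peAux P o n y * ∑' x, ENNReal.ofReal (P y x) := by
          simp [ENNReal.tsum_mul_left]
      _ = 1 := by
          simp only [fun y => ofReal_tsum_P_eq_one hP0 hP1 y, mul_one]
          exact peAux_tsum_eq_one hP0 hP1 o n

noncomputable def cylwAux (P : S → S → ℝ) (o : S) (n : ℕ) (v : Fin (n+1) → S) : ENNReal :=
  (if v 0 = o then 1 else 0) * ∏ i : Fin n, ENNReal.ofReal (P (v i.castSucc) (v i.succ))

lemma cylwAux_snoc (P : S → S → ℝ) (o : S) (n : ℕ) (u : Fin (n+1) → S) (z : S) :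
    cylwAux P o (n+1) (Fin.snoc u z) =
      cylwAux P o n u * ENNReal.ofReal (P (u (Fin.last n)) z) := by
  unfold cylwAux
  rw [Fin.prod_univ_castSucc]
  have h0 : (Fin.snoc u z : Fin (n+2) → S) 0 = u 0 := by
    rw [← Fin.castSucc_zero, Fin.snoc_castSucc]
  rw [h0]
  have h1 : ∀ j : Fin n,
      (Fin.snoc u z : Fin (n+2) → S) (Fin.castSucc j).castSucc = u j.castSucc := by
    intro j; rw [Fin.snoc_castSucc]
  have h2 : ∀ j : Fin n,
      (Fin.snoc u z : Fin (n+2) → S) (Fin.castSucc j).succ = u j.succ := by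
    intro j; rw [Fin.succ_castSucc, Fin.snoc_castSucc]
  have h3 : (Fin.snoc u z : Fin (n+2) → S) (Fin.last n).castSucc = u (Fin.last n) := by
    rw [Fin.snoc_castSucc]
  have h4 : (Fin.snoc u z : Fin (n+2) → S) (Fin.last n).succ = z := by
    rw [Fin.succ_last, Fin.snoc_last]
  rw [h3, h4]
  rw [Finset.prod_congr rfl (fun j _ => by rw [h1 j, h2 j])]
  ring

lemma tsum_cylwAux (P : S → S → ℝ) (o : S) :
    ∀ n y, (∑' v : Fin (n+1) → S, if v (Fin.last n) = y then cylwAux P o n v else 0)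
      = peAux P o n y
  | 0, y => by
    rw [← ((Equiv.funUnique (Fin 1) S).symm.tsum_eq
      (fun v => if v (Fin.last 0) = y then cylwAux P o 0 v else 0))]
    have : ∀ s : S, (if ((Equiv.funUnique (Fin 1) S).symm s) (Fin.last 0) = y
        then cylwAux P o 0 ((Equiv.funUnique (Fin 1) S).symm s) else 0)
        = if s = y then (if s = o then 1 else 0) else 0 := by
      intro s
      simp [cylwAux, Equiv.funUnique]
    rw [tsum_congr this]
    rw [tsum_eq_single y (fun s hs => if_neg hs)]
    simp [peAux]
  | n + 1, y => by
    classical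
    rw [← ((Fin.insertNthEquiv (fun _ => S) (Fin.last (n+1))).tsum_eq
      (fun v => if v (Fin.last (n+1)) = y then cylwAux P o (n+1) v else 0))]
    have hsymm : ∀ p : S × (Fin (n+1) → S),
        (Fin.insertNthEquiv (fun _ => S) (Fin.last (n+1))) p = Fin.snoc p.2 p.1 := by
      intro p
      simp [Fin.insertNthEquiv_apply, Fin.insertNth_last]
      rfl
    rw [tsum_congr (fun p => by rw [hsymm p])]
    rw [ENNReal.tsum_prod']
    have hz : ∀ z : S, ∑' u : Fin (n+1) → S,
        (if (Fin.snoc u z : Fin (n+2) → S) (Fin.last (n+1)) = y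
          then cylwAux P o (n+1) (Fin.snoc u z) else 0)
        = if z = y then ∑' u : Fin (n+1) → S,
            cylwAux P o n u * ENNReal.ofReal (P (u (Fin.last n)) z) else 0 := by
      intro z
      by_cases hzy : z = y
      · simp only [Fin.snoc_last, hzy, if_true]
        exact tsum_congr fun u => by rw [cylwAux_snoc]
      · simp [Fin.snoc_last, hzy]
    rw [tsum_congr hz]
    rw [tsum_eq_single y (fun z hz' => if_neg hz'), if_pos rfl]
    have hpart : ∀ u : Fin (n+1) → S,
        cylwAux P o n u * ENNReal.ofReal (P (u (Fin.last n)) y)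
        = ∑' x : S, (if u (Fin.last n) = x then cylwAux P o n u else 0)
            * ENNReal.ofReal (P x y) := by
      intro u
      rw [tsum_eq_single (u (Fin.last n)) (fun x hx => by rw [if_neg (Ne.symm hx), zero_mul])]
      rw [if_pos rfl]
    rw [tsum_congr hpart, ENNReal.tsum_comm]
    have : ∀ x : S, (∑' u : Fin (n+1) → S, (if u (Fin.last n) = x then cylwAux P o n u else 0)
        * ENNReal.ofReal (P x y))
        = peAux P o n x * ENNReal.ofReal (P x y) := by
      intro x
      rw [ENNReal.tsum_mul_right, tsum_cylwAux P o n x]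
    rw [tsum_congr this]
    rfl

lemma marginalAux {P : S → S → ℝ} {o : S} [MeasurableSpace S] [MeasurableSingletonClass S]
    (Q : Measure (ℕ → S))
    (hQcyl : ∀ (n : ℕ) (s : ℕ → S),
      Q {ω | ∀ i ≤ n, ω i = s i} =
        (if s 0 = o then 1 else 0) *
          ∏ i ∈ Finset.range n, ENNReal.ofReal (P (s i) (s (i + 1))))
    (n : ℕ) (y : S) :
    Q {ω | ω n = y} = peAux P o n y := by
  classical
  set extv : (Fin (n+1) → S) → ℕ → S :=
    fun v i => v ⟨min i n, by omega⟩ with hextv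
  set Cyl : (Fin (n+1) → S) → Set (ℕ → S) :=
    fun v => {ω | ∀ i ≤ n, ω i = extv v i} with hCyl
  have hval : ∀ (v : Fin (n+1) → S) (i : ℕ) (hi : i ≤ n), extv v i = v ⟨i, by omega⟩ := by
    intro v i hi
    simp only [hextv]
    congr 1
    exact Fin.ext (by simp [Nat.min_eq_left hi])
  have hset : {ω : ℕ → S | ω n = y}
      = ⋃ (v : {v : Fin (n+1) → S // v (Fin.last n) = y}), Cyl v.1 := by
    ext ω
    constructor
    · intro hω
      refine Set.mem_iUnion.mpr ⟨⟨fun i => ω i, ?_⟩, ?_⟩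
      · simpa [Fin.last] using hω
      · intro i hi
        rw [hval _ i hi]
    · intro hω
      obtain ⟨v, hv⟩ := Set.mem_iUnion.mp hω
      have := hv n le_rfl
      rw [hval _ n le_rfl] at this
      have hlast : (⟨n, by omega⟩ : Fin (n+1)) = Fin.last n := rfl
      rw [hlast] at this
      simpa [this] using v.2
  have hmeas : ∀ v : Fin (n+1) → S, MeasurableSet (Cyl v) := by
    intro v
    have : Cyl v = ⋂ (i : ℕ) (_ : i ≤ n), (fun ω : ℕ → S => ω i) ⁻¹' {extv v i} := by
      ext ω; simp [hCyl, Set.mem_iInter]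
    rw [this]
    exact MeasurableSet.iInter fun i => MeasurableSet.iInter fun _ =>
      measurable_pi_apply i (measurableSet_singleton _)
  have hdisj : Pairwise (Function.onFun Disjoint
      (fun v : {v : Fin (n+1) → S // v (Fin.last n) = y} => Cyl v.1)) := by
    intro v w hvw
    refine Set.disjoint_left.mpr fun {ω} hv hw => hvw ?_
    apply Subtype.ext
    funext i
    have hi : (i : ℕ) ≤ n := by omega
    have h1 := hv i hi
    have h2 := hw i hi
    rw [hval _ i hi] at h1 h2
    have : (⟨(i : ℕ), by omega⟩ : Fin (n+1)) = i := Fin.ext rfl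
    rw [this] at h1 h2
    rw [← h1, ← h2]
  have hQC : ∀ v : Fin (n+1) → S, Q (Cyl v) = cylwAux P o n v := by
    intro v
    have := hQcyl n (extv v)
    rw [hCyl]
    rw [this]
    unfold cylwAux
    congr 1
    · rw [← Fin.prod_univ_eq_prod_range (fun i => ENNReal.ofReal (P (extv v i) (extv v (i+1)))) n]
      apply Finset.prod_congr rfl
      intro j _
      rw [hval v j (by omega), hval v (j+1) (by omega)]
      congr 2 <;> exact Fin.ext (by simp)
  rw [hset, measure_iUnion hdisj (fun v => hmeas v.1)]
  have h1 : ∑' (v : {v : Fin (n+1) → S // v (Fin.last n) = y}), Q (Cyl v.1)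
      = ∑' (v : {v : Fin (n+1) → S // v (Fin.last n) = y}), cylwAux P o n v.1 :=
    tsum_congr fun v => hQC v.1
  rw [h1, ← tsum_cylwAux P o n y]
  exact (tsum_subtype {v : Fin (n+1) → S | v (Fin.last n) = y} (cylwAux P o n)).trans
    (tsum_congr fun v => by simp [Set.indicator_apply])

lemma EBAux {S : Type*} [Countable S] [DecidableEq S]
    {Ω : Type*} {mΩ : MeasurableSpace Ω} (μ : Measure Ω) [IsProbabilityMeasure μ]
    (F : Filtration ℕ mΩ) (P : S → S → ℝ) (hP0 : ∀ x y, 0 ≤ P x y)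
    (m : ℝ) (hm : 1 < m) (o : S)
    (B : ℕ → Ω → S → ℕ)
    (hadapt : ∀ n x, Measurable[F n] (fun ω => B n ω x))
    (hfin : ∀ n ω, (Function.support (B n ω)).Finite)
    (hint : ∀ n x, Integrable (fun ω => (B n ω x : ℝ)) μ)
    (hB0 : ∀ ω x, B 0 ω x = if x = o then 1 else 0)
    (hbranch : ∀ n x, μ[fun ω => (B (n + 1) ω x : ℝ)|F n]
        =ᵐ[μ] fun ω => m * ∑' y, (B n ω y : ℝ) * P y x) :
    ∀ n x, ∫⁻ ω, ((B n ω x : ℕ) : ENNReal) ∂μ = (ENNReal.ofReal m) ^ n * peAux P o n x := by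
  have hm0 : (0:ℝ) ≤ m := (lt_trans zero_lt_one hm).le
  have measBN : ∀ n y, Measurable (fun ω => B n ω y) := fun n y =>
    (hadapt n y).mono (F.le n) le_rfl
  have measB : ∀ n y, Measurable (fun ω => ((B n ω y : ℕ) : ENNReal)) := fun n y =>
    (measurable_of_countable (fun k : ℕ => (k : ENNReal))).comp (measBN n y)
  intro n
  induction n with
  | zero =>
    intro x
    simp only [hB0]
    by_cases hx : x = o <;> simp [hx, peAux]
  | succ n ih =>
    intro x
    have hsummable : ∀ ω, Summable (fun y => (B n ω y : ℝ) * P y x) := by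
      intro ω
      apply summable_of_ne_finset_zero (s := (hfin n ω).toFinset)
      intro y hy
      have : B n ω y = 0 := by
        by_contra h
        exact hy ((hfin n ω).mem_toFinset.mpr h)
      simp [this]
    have hnn : ∀ ω, 0 ≤ m * ∑' y, (B n ω y : ℝ) * P y x := fun ω =>
      mul_nonneg hm0 (tsum_nonneg fun y => mul_nonneg (Nat.cast_nonneg _) (hP0 y x))
    have hg : Integrable (fun ω => m * ∑' y, (B n ω y : ℝ) * P y x) μ :=
      (integrable_condExp).congr (hbranch n x)
    have h1 : ∫ ω, (B (n+1) ω x : ℝ) ∂μ = ∫ ω, (m * ∑' y, (B n ω y : ℝ) * P y x) ∂μ := by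
      rw [← integral_condExp (F.le n) (f := fun ω => (B (n+1) ω x : ℝ))]
      exact integral_congr_ae (hbranch n x)
    calc ∫⁻ ω, ((B (n+1) ω x : ℕ) : ℝ≥0∞) ∂μ
        = ∫⁻ ω, ENNReal.ofReal ((B (n+1) ω x : ℝ)) ∂μ := by
          simp [ENNReal.ofReal_natCast]
      _ = ENNReal.ofReal (∫ ω, (B (n+1) ω x : ℝ) ∂μ) :=
          (ofReal_integral_eq_lintegral_ofReal (hint (n+1) x)
            (Filter.Eventually.of_forall fun ω => Nat.cast_nonneg _)).symm
      _ = ENNReal.ofReal (∫ ω, (m * ∑' y, (B n ω y : ℝ) * P y x) ∂μ) := by rw [h1]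
      _ = ∫⁻ ω, ENNReal.ofReal (m * ∑' y, (B n ω y : ℝ) * P y x) ∂μ :=
          ofReal_integral_eq_lintegral_ofReal hg (Filter.Eventually.of_forall hnn)
      _ = ∫⁻ ω, ENNReal.ofReal m
            * ∑' y, ((B n ω y : ℕ) : ℝ≥0∞) * ENNReal.ofReal (P y x) ∂μ := by
          apply lintegral_congr
          intro ω
          rw [ENNReal.ofReal_mul hm0]
          congr 1
          rw [ENNReal.ofReal_tsum_of_nonneg
            (fun y => mul_nonneg (Nat.cast_nonneg _) (hP0 y x)) (hsummable ω)]
          exact tsum_congr fun y => by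
            rw [ENNReal.ofReal_mul (Nat.cast_nonneg _), ENNReal.ofReal_natCast]
      _ = ENNReal.ofReal m
            * ∑' y, (∫⁻ ω, ((B n ω y : ℕ) : ℝ≥0∞) ∂μ) * ENNReal.ofReal (P y x) := by
          rw [lintegral_const_mul _
            (Measurable.ennreal_tsum fun y => (measB n y).mul_const _)]
          congr 1
          rw [lintegral_tsum (fun y => ((measB n y).mul_const _).aemeasurable)]
          exact tsum_congr fun y => lintegral_mul_const _ (measB n y)
      _ = (ENNReal.ofReal m) ^ (n+1) * peAux P o (n+1) x := by
          simp only [ih]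
          have : ∀ y : S, ((ENNReal.ofReal m) ^ n * peAux P o n y) * ENNReal.ofReal (P y x)
              = (ENNReal.ofReal m) ^ n * (peAux P o n y * ENNReal.ofReal (P y x)) :=
            fun y => mul_assoc _ _ _
          rw [tsum_congr this, ENNReal.tsum_mul_left, ← mul_assoc, ← pow_succ']
          rfl

end Aux

lemma lintegral_brwMeasureAux {S C : Type*} [Countable S] [MeasurableSpace C] (ι : S → C)
    (w : S → ENNReal) {g : C → ENNReal} (hg : Measurable g) :
    ∫⁻ c, g c ∂(brwMeasure ι w) = ∑' x, w x * g (ι x) := by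
  rw [brwMeasure, lintegral_sum_measure]
  exact tsum_congr fun x => by rw [lintegral_smul_measure, lintegral_dirac' _ hg, smul_eq_mul]

/-- Assume the martingale `⟨1, B̄ₙ⟩` is uniformly integrable (which, for a
genuine branching random walk, is the Kesten–Stigum `L log L` condition), and let `W` be the
almost sure weak limit of the random measures `B̄ₙ` on `C`. Then for every Borel set `A ⊆ C`
one has `E[W(A)] = 𝐏ₒ(X_∞ ∈ A)`: the expectation measure of `W` is the law of `X_∞`. -/
theorem brw_expectation_identity_borel
    {S : Type*} [Countable S] [DecidableEq S]
    (P : S → S → ℝ)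
    (hP0 : ∀ x y, 0 ≤ P x y)
    (hP1 : ∀ x, HasSum (fun y => P x y) 1)
    (m : ℝ) (hm : 1 < m) (o : S)
    {Ω : Type*} {mΩ : MeasurableSpace Ω}
    (μ : Measure Ω) [IsProbabilityMeasure μ]
    (F : Filtration ℕ mΩ)
    (B : ℕ → Ω → S → ℕ)
    (hadapt : ∀ n x, Measurable[F n] (fun ω => B n ω x))
    (hfin : ∀ n ω, (Function.support (B n ω)).Finite)
    (hint : ∀ n x, Integrable (fun ω => (B n ω x : ℝ)) μ)
    (hB0 : ∀ ω x, B 0 ω x = if x = o then 1 else 0)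
    (hbranch : ∀ n x,
      μ[fun ω => (B (n + 1) ω x : ℝ)|F n]
        =ᵐ[μ] fun ω => m * ∑' y, (B n ω y : ℝ) * P y x)
    {C : Type*} [TopologicalSpace C] [CompactSpace C]
    [TopologicalSpace.MetrizableSpace C] [MeasurableSpace C] [BorelSpace C]
    [TopologicalSpace S] [DiscreteTopology S]
    (ι : S → C) (hι : IsOpenEmbedding ι)
    [MeasurableSpace S] [MeasurableSingletonClass S]
    (Q : S → Measure (ℕ → S))
    (hQprob : ∀ x, IsProbabilityMeasure (Q x))
    (hQcyl : ∀ (x : S) (n : ℕ) (s : ℕ → S),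
      Q x {ω | ∀ i ≤ n, ω i = s i} =
        (if s 0 = x then 1 else 0) *
          ∏ i ∈ Finset.range n, ENNReal.ofReal (P (s i) (s (i + 1))))
    (Xinf : (ℕ → S) → C)
    (hXmeas : Measurable Xinf)
    (hXconv : ∀ x : S, ∀ᵐ ω ∂(Q x),
      Xinf ω ∈ (Set.range ι)ᶜ ∧ Tendsto (fun n => ι (ω n)) atTop (𝓝 (Xinf ω)))
    (hUI : UniformIntegrable (fun n ω => (m ^ n)⁻¹ * ∑' x, (B n ω x : ℝ)) 1 μ)
    (W : Ω → Measure C) (hWfin : ∀ ω, IsFiniteMeasure (W ω))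
    (hWconv : ∀ᵐ ω ∂μ, ∀ f : BoundedContinuousFunction C ℝ,
      Tendsto
        (fun n => ∫ c, f c
          ∂(brwMeasure ι fun x => ENNReal.ofReal ((m ^ n)⁻¹ * (B n ω x : ℝ))))
        atTop (𝓝 (∫ c, f c ∂(W ω)))) :
    ∀ A : Set C, MeasurableSet A → ∫⁻ ω, W ω A ∂μ = Q o (Xinf ⁻¹' A) := by
  classical
  have hm0 : (0:ℝ) < m := lt_trans zero_lt_one hm
  have hmpow : ∀ n : ℕ, (0:ℝ) < m ^ n := fun n => pow_pos hm0 n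
  haveI := hQprob o
  set ν : Measure C := (Q o).map Xinf with hν
  haveI : IsProbabilityMeasure ν := Measure.isProbabilityMeasure_map hXmeas.aemeasurable
  -- basic measurability
  have measBN : ∀ n y, Measurable (fun ω => B n ω y) := fun n y =>
    (hadapt n y).mono (F.le n) le_rfl
  have measw : ∀ n x, Measurable (fun ω => ENNReal.ofReal ((m ^ n)⁻¹ * (B n ω x : ℝ))) :=
    fun n x => (measurable_of_countable (fun k : ℕ => ENNReal.ofReal ((m ^ n)⁻¹ * (k : ℝ)))).comp
      (measBN n x)
  have measB : ∀ n y, Measurable (fun ω => ((B n ω y : ℕ) : ℝ≥0∞)) := fun n y =>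
    (measurable_of_countable (fun k : ℕ => (k : ℝ≥0∞))).comp (measBN n y)
  have hsummB : ∀ n ω, Summable (fun x => (B n ω x : ℝ)) := by
    intro n ω
    apply summable_of_ne_finset_zero (s := (hfin n ω).toFinset)
    intro x hx
    have : B n ω x = 0 := by
      by_contra h; exact hx ((hfin n ω).mem_toFinset.mpr h)
    simp [this]
  have hBnn : ∀ n ω, 0 ≤ (m ^ n)⁻¹ * ∑' x, (B n ω x : ℝ) := fun n ω =>
    mul_nonneg (inv_nonneg.2 (hmpow n).le) (tsum_nonneg fun x => Nat.cast_nonneg _)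
  -- mass identity
  have hmass : ∀ n ω, (∑' x, ENNReal.ofReal ((m ^ n)⁻¹ * (B n ω x : ℝ)))
      = ENNReal.ofReal ((m ^ n)⁻¹ * ∑' x, (B n ω x : ℝ)) := by
    intro n ω
    rw [← tsum_mul_left, ENNReal.ofReal_tsum_of_nonneg
      (fun x => mul_nonneg (inv_nonneg.2 (hmpow n).le) (Nat.cast_nonneg _))
      ((hsummB n ω).mul_left _)]
  -- expectation of the normalized weights
  have hEB := EBAux μ F P hP0 m hm o B hadapt hfin hint hB0 hbranch
  have hMn0 : ∀ n : ℕ, ((ENNReal.ofReal m) ^ n) ≠ 0 :=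
    fun n => pow_ne_zero _ (by simp [ENNReal.ofReal_eq_zero]; linarith)
  have hMnt : ∀ n : ℕ, ((ENNReal.ofReal m) ^ n) ≠ ⊤ :=
    fun n => ENNReal.pow_ne_top ENNReal.ofReal_ne_top
  have hEw : ∀ n x, ∫⁻ ω, ENNReal.ofReal ((m ^ n)⁻¹ * (B n ω x : ℝ)) ∂μ = peAux P o n x := by
    intro n x
    have hpt : ∀ ω, ENNReal.ofReal ((m ^ n)⁻¹ * (B n ω x : ℝ))
        = ENNReal.ofReal ((m ^ n)⁻¹) * ((B n ω x : ℕ) : ℝ≥0∞) := fun ω => by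
      rw [ENNReal.ofReal_mul (inv_nonneg.2 (hmpow n).le), ENNReal.ofReal_natCast]
    rw [lintegral_congr hpt, lintegral_const_mul _ (measB n x), hEB n x,
      ENNReal.ofReal_inv_of_pos (hmpow n), ENNReal.ofReal_pow hm0.le, ← mul_assoc,
      ENNReal.inv_mul_cancel (hMn0 n) (hMnt n), one_mul]
  have hpe1 : ∀ n, ∑' x, peAux P o n x = 1 := peAux_tsum_eq_one hP0 hP1 o
  -- ⋆ : the key identity for nonnegative bounded continuous functions
  have star : ∀ f : BoundedContinuousFunction C ℝ, (∀ c, 0 ≤ f c) →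
      Integrable (fun ω => ∫ c, f c ∂(W ω)) μ ∧
      ∫ ω, (∫ c, f c ∂(W ω)) ∂μ = ∫ p, f (Xinf p) ∂(Q o) := by
    intro f hf0
    set G : ℕ → Ω → ℝ≥0∞ :=
      fun n ω => ∑' x, ENNReal.ofReal ((m ^ n)⁻¹ * (B n ω x : ℝ)) * ENNReal.ofReal (f (ι x))
      with hGdef
    have measf : Measurable fun c => ENNReal.ofReal (f c) :=
      f.continuous.measurable.ennreal_ofReal
    have hGmeas : ∀ n, Measurable (G n) := fun n =>
      Measurable.ennreal_tsum fun x => (measw n x).mul_const _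
    have hfc : ∀ c, f c ≤ ‖f‖ := fun c =>
      le_trans (le_abs_self _) (f.norm_coe_le_norm c)
    have hGle : ∀ n ω, G n ω ≤ ENNReal.ofReal ‖f‖
        * ENNReal.ofReal ((m ^ n)⁻¹ * ∑' x, (B n ω x : ℝ)) := by
      intro n ω
      calc G n ω ≤ ∑' x, ENNReal.ofReal ((m ^ n)⁻¹ * (B n ω x : ℝ)) * ENNReal.ofReal ‖f‖ :=
            ENNReal.tsum_le_tsum fun x =>
              mul_le_mul_right (ENNReal.ofReal_le_ofReal (hfc (ι x))) _
        _ = ENNReal.ofReal ‖f‖ * ∑' x, ENNReal.ofReal ((m ^ n)⁻¹ * (B n ω x : ℝ)) := by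
            rw [← ENNReal.tsum_mul_left]; exact tsum_congr fun x => mul_comm _ _
        _ = _ := by rw [hmass n ω]
    have hGne : ∀ n ω, G n ω ≠ ∞ := fun n ω =>
      ne_top_of_le_ne_top (ENNReal.mul_ne_top ENNReal.ofReal_ne_top ENNReal.ofReal_ne_top)
        (hGle n ω)
    have hgseq : ∀ n ω, ∫ c, f c
        ∂(brwMeasure ι fun x => ENNReal.ofReal ((m ^ n)⁻¹ * (B n ω x : ℝ)))
        = (G n ω).toReal := by
      intro n ω
      rw [integral_eq_lintegral_of_nonneg_ae (Filter.Eventually.of_forall hf0)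
        f.continuous.aestronglyMeasurable]
      congr 1
      exact lintegral_brwMeasureAux ι _ measf
    have hae : ∀ᵐ ω ∂μ, Tendsto (fun n => (G n ω).toReal) atTop (𝓝 (∫ c, f c ∂(W ω))) := by
      filter_upwards [hWconv] with ω hω
      have h := hω f
      simp only [hgseq] at h
      exact h
    have hgAEM : AEMeasurable (fun ω => ∫ c, f c ∂(W ω)) μ :=
      aemeasurable_of_tendsto_metrizable_ae atTop
        (fun n => ((hGmeas n).ennreal_toReal).aemeasurable) hae
    obtain ⟨Cb, hCb⟩ := hUI.2.2
    have hhInt : ∀ n, Integrable (fun ω => (m ^ n)⁻¹ * ∑' x, (B n ω x : ℝ)) μ := fun n =>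
      memLp_one_iff_integrable.mp ⟨hUI.1 n, lt_of_le_of_lt (hCb n) ENNReal.coe_lt_top⟩
    have hGtoReal_le : ∀ n ω, (G n ω).toReal ≤ ‖f‖ * ((m ^ n)⁻¹ * ∑' x, (B n ω x : ℝ)) := by
      intro n ω
      calc (G n ω).toReal
          ≤ (ENNReal.ofReal ‖f‖ * ENNReal.ofReal ((m ^ n)⁻¹ * ∑' x, (B n ω x : ℝ))).toReal :=
            ENNReal.toReal_mono
              (ENNReal.mul_ne_top ENNReal.ofReal_ne_top ENNReal.ofReal_ne_top) (hGle n ω)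
        _ = ‖f‖ * ((m ^ n)⁻¹ * ∑' x, (B n ω x : ℝ)) := by
            rw [ENNReal.toReal_mul, ENNReal.toReal_ofReal (norm_nonneg f),
              ENNReal.toReal_ofReal (hBnn n ω)]
    have hgseqInt : ∀ n, Integrable (fun ω => (G n ω).toReal) μ := by
      intro n
      refine Integrable.mono ((hhInt n).const_mul ‖f‖)
        ((hGmeas n).ennreal_toReal.aestronglyMeasurable)
        (Filter.Eventually.of_forall fun ω => ?_)
      rw [Real.norm_eq_abs, abs_of_nonneg ENNReal.toReal_nonneg, Real.norm_eq_abs]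
      exact le_trans (hGtoReal_le n ω) (le_abs_self _)
    -- uniform integrability of the sequence
    have hfpos : (0:ℝ) < ‖f‖ + 1 := by positivity
    have habs : ∀ n ω, |(G n ω).toReal| ≤ (‖f‖ + 1) * ((m ^ n)⁻¹ * ∑' x, (B n ω x : ℝ)) := by
      intro n ω
      rw [abs_of_nonneg ENNReal.toReal_nonneg]
      exact le_trans (hGtoReal_le n ω)
        (mul_le_mul_of_nonneg_right (by linarith) (hBnn n ω))
    have hunif : UnifIntegrable (fun n ω => (G n ω).toReal) 1 μ := by
      intro ε hε
      obtain ⟨δ, hδ, hbound⟩ := hUI.2.1 (div_pos hε hfpos)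
      refine ⟨δ, hδ, fun i s hs hμs => ?_⟩
      have hmono : ∀ ω, ‖s.indicator (fun ω => (G i ω).toReal) ω‖
          ≤ ‖s.indicator ((‖f‖ + 1) • fun ω => (m ^ i)⁻¹ * ∑' x, (B i ω x : ℝ)) ω‖ := by
        intro ω
        by_cases hωs : ω ∈ s
        · simp only [Set.indicator_of_mem hωs, Pi.smul_apply, smul_eq_mul,
            Real.norm_eq_abs]
          rw [abs_of_nonneg (mul_nonneg hfpos.le (hBnn i ω))]
          exact habs i ω
        · simp [Set.indicator_of_notMem hωs]
      calc eLpNorm (s.indicator fun ω => (G i ω).toReal) 1 μ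
          ≤ eLpNorm (s.indicator ((‖f‖ + 1) • fun ω => (m ^ i)⁻¹ * ∑' x, (B i ω x : ℝ))) 1 μ :=
            eLpNorm_mono hmono
        _ = eLpNorm ((‖f‖ + 1) • s.indicator fun ω => (m ^ i)⁻¹ * ∑' x, (B i ω x : ℝ)) 1 μ := by
            congr 1
            funext ω
            by_cases hω : ω ∈ s <;>
              simp [Set.indicator_of_mem, Set.indicator_of_notMem, hω]
        _ = ‖(‖f‖ + 1)‖₊ * eLpNorm (s.indicator fun ω => (m ^ i)⁻¹ * ∑' x, (B i ω x : ℝ)) 1 μ :=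
            eLpNorm_const_smul _ _ _ _
        _ ≤ ENNReal.ofReal (‖f‖ + 1) * ENNReal.ofReal (ε / (‖f‖ + 1)) := by
            rw [show ((‖(‖f‖ + 1)‖₊ : ℝ≥0∞)) = ENNReal.ofReal (‖f‖ + 1) from Real.enorm_eq_ofReal hfpos.le]
            exact mul_le_mul_right (hbound i s hs hμs) _
        _ ≤ ENNReal.ofReal ε := by
            rw [← ENNReal.ofReal_mul hfpos.le, mul_div_cancel₀ _ (ne_of_gt hfpos)]
    -- the limit is in L¹
    have hgnn : ∀ ω, 0 ≤ ∫ c, f c ∂(W ω) := fun ω => integral_nonneg fun c => hf0 c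
    have hMem : MemLp (fun ω => ∫ c, f c ∂(W ω)) 1 μ := by
      refine ⟨hgAEM.aestronglyMeasurable, ?_⟩
      rw [eLpNorm_one_eq_lintegral_enorm]
      have key : ∀ᵐ ω ∂μ, (‖∫ c, f c ∂(W ω)‖₊ : ℝ≥0∞)
          = Filter.liminf (fun n => (‖(G n ω).toReal‖₊ : ℝ≥0∞)) atTop := by
        filter_upwards [hae] with ω hω
        exact (ENNReal.tendsto_coe.mpr ((continuous_nnnorm.tendsto _).comp hω)).liminf_eq.symm
      have hbd : ∀ n, ∫⁻ ω, (‖(G n ω).toReal‖₊ : ℝ≥0∞) ∂μ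
          ≤ ENNReal.ofReal (‖f‖ + 1) * Cb := by
        intro n
        have h1 : ∫⁻ ω, (‖(G n ω).toReal‖₊ : ℝ≥0∞) ∂μ
            = eLpNorm (fun ω => (G n ω).toReal) 1 μ := by
          rw [eLpNorm_one_eq_lintegral_enorm]; rfl
        rw [h1]
        calc eLpNorm (fun ω => (G n ω).toReal) 1 μ
            ≤ eLpNorm ((‖f‖ + 1) • fun ω => (m ^ n)⁻¹ * ∑' x, (B n ω x : ℝ)) 1 μ := by
              apply eLpNorm_mono
              intro ω
              simp only [Pi.smul_apply, smul_eq_mul, Real.norm_eq_abs]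
              rw [abs_of_nonneg (mul_nonneg hfpos.le (hBnn n ω))]
              exact habs n ω
          _ = ‖(‖f‖ + 1)‖₊ * eLpNorm (fun ω => (m ^ n)⁻¹ * ∑' x, (B n ω x : ℝ)) 1 μ :=
              eLpNorm_const_smul _ _ _ _
          _ ≤ ENNReal.ofReal (‖f‖ + 1) * Cb := by
              rw [show ((‖(‖f‖ + 1)‖₊ : ℝ≥0∞)) = ENNReal.ofReal (‖f‖ + 1) from Real.enorm_eq_ofReal hfpos.le]
              exact mul_le_mul_right (hCb n) _
      calc ∫⁻ ω, (‖∫ c, f c ∂(W ω)‖₊ : ℝ≥0∞) ∂μ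
          = ∫⁻ ω, Filter.liminf (fun n => (‖(G n ω).toReal‖₊ : ℝ≥0∞)) atTop ∂μ :=
            lintegral_congr_ae key
        _ ≤ Filter.liminf (fun n => ∫⁻ ω, (‖(G n ω).toReal‖₊ : ℝ≥0∞) ∂μ) atTop :=
            lintegral_liminf_le fun n =>
              ((hGmeas n).ennreal_toReal.nnnorm).coe_nnreal_ennreal
        _ ≤ ENNReal.ofReal (‖f‖ + 1) * Cb := by
            exact Filter.liminf_le_of_frequently_le' (Filter.Frequently.of_forall hbd)
        _ < ⊤ := ENNReal.mul_lt_top ENNReal.ofReal_lt_top ENNReal.coe_lt_top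
    have hInt : Integrable (fun ω => ∫ c, f c ∂(W ω)) μ := memLp_one_iff_integrable.mp hMem
    have hL1 := tendsto_Lp_finite_of_tendsto_ae (μ := μ) le_rfl ENNReal.one_ne_top
      (fun n => (hGmeas n).ennreal_toReal.aestronglyMeasurable) hMem hunif hae
    have hTend1 : Tendsto (fun n => ∫ ω, (G n ω).toReal ∂μ) atTop
        (𝓝 (∫ ω, (∫ c, f c ∂(W ω)) ∂μ)) :=
      tendsto_integral_of_L1' _ hInt.aestronglyMeasurable (Filter.Eventually.of_forall hgseqInt) hL1
    -- identification of the n-th expectations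
    have hval : ∀ n, ∫ ω, (G n ω).toReal ∂μ = ∫ p, f (ι (p n)) ∂(Q o) := by
      intro n
      have hTn : ∫⁻ ω, G n ω ∂μ = ∑' x, peAux P o n x * ENNReal.ofReal (f (ι x)) := by
        rw [hGdef]
        rw [lintegral_tsum (fun x => ((measw n x).mul_const _).aemeasurable)]
        exact tsum_congr fun x => by rw [lintegral_mul_const _ (measw n x), hEw n x]
      have hL : ∫ ω, (G n ω).toReal ∂μ = (∫⁻ ω, G n ω ∂μ).toReal := by
        rw [integral_eq_lintegral_of_nonneg_ae
          (Filter.Eventually.of_forall fun ω => ENNReal.toReal_nonneg)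
          (hGmeas n).ennreal_toReal.aestronglyMeasurable]
        congr 1
        exact lintegral_congr fun ω => ENNReal.ofReal_toReal (hGne n ω)
      have hR : ∫ p, f (ι (p n)) ∂(Q o)
          = (∑' x, peAux P o n x * ENNReal.ofReal (f (ι x))).toReal := by
        rw [integral_eq_lintegral_of_nonneg_ae
          (Filter.Eventually.of_forall fun p => hf0 _)
          ((measurable_of_countable (fun s : S => f (ι s))).comp
            (measurable_pi_apply n)).aestronglyMeasurable]
        congr 1
        rw [← lintegral_map (f := fun s : S => ENNReal.ofReal (f (ι s)))
            (g := fun p : ℕ → S => p n) (measurable_of_countable _) (measurable_pi_apply n),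
          lintegral_countable' (f := fun s : S => ENNReal.ofReal (f (ι s)))]
        apply tsum_congr; intro y
        rw [Measure.map_apply (measurable_pi_apply n) (measurableSet_singleton y)]
        have h2 : (fun p : ℕ → S => p n) ⁻¹' {y} = {ω : ℕ → S | ω n = y} := rfl
        rw [h2, marginalAux (Q o) (fun k s => hQcyl o k s) n y, mul_comm]
      rw [hL, hR, hTn]
    have hTend2 : Tendsto (fun n => ∫ p, f (ι (p n)) ∂(Q o)) atTop
        (𝓝 (∫ p, f (Xinf p) ∂(Q o))) := by
      apply tendsto_integral_of_dominated_convergence (fun _ => ‖f‖)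
      · exact fun n => ((measurable_of_countable (fun s : S => f (ι s))).comp
          (measurable_pi_apply n)).aestronglyMeasurable
      · exact integrable_const _
      · exact fun n => Filter.Eventually.of_forall fun p => f.norm_coe_le_norm _
      · filter_upwards [hXconv o] with p hp
        exact (f.continuous.tendsto _).comp hp.2
    refine ⟨hInt, ?_⟩
    have h3 : Tendsto (fun n => ∫ ω, (G n ω).toReal ∂μ) atTop
        (𝓝 (∫ p, f (Xinf p) ∂(Q o))) := by
      simp only [hval]; exact hTend2
    exact tendsto_nhds_unique hTend1 h3
  -- lintegral version of ⋆
  have starL : ∀ f : BoundedContinuousFunction C ℝ, (∀ c, 0 ≤ f c) →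
      AEMeasurable (fun ω => ∫⁻ c, ENNReal.ofReal (f c) ∂(W ω)) μ ∧
      ∫⁻ ω, (∫⁻ c, ENNReal.ofReal (f c) ∂(W ω)) ∂μ = ∫⁻ c, ENNReal.ofReal (f c) ∂ν := by
    intro f hf0
    obtain ⟨hInt, hEq⟩ := star f hf0
    have hWint : ∀ ω, Integrable (fun c => f c) (W ω) := fun ω =>
      f.integrable (W ω)
    have hptw : (fun ω => ∫⁻ c, ENNReal.ofReal (f c) ∂(W ω))
        = fun ω => ENNReal.ofReal (∫ c, f c ∂(W ω)) := funext fun ω =>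
      (ofReal_integral_eq_lintegral_ofReal (hWint ω)
        (Filter.Eventually.of_forall hf0)).symm
    have hXint : Integrable (fun p => f (Xinf p)) (Q o) := by
      refine Integrable.mono' (integrable_const ‖f‖)
        ((f.continuous.measurable.comp hXmeas)).aestronglyMeasurable
        (Filter.Eventually.of_forall fun p => f.norm_coe_le_norm _)
    constructor
    · rw [hptw]
      exact ENNReal.measurable_ofReal.comp_aemeasurable hInt.aestronglyMeasurable.aemeasurable
    · rw [hptw, ← ofReal_integral_eq_lintegral_ofReal hInt
        (Filter.Eventually.of_forall fun ω => integral_nonneg fun c => hf0 c), hEq,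
        ofReal_integral_eq_lintegral_ofReal hXint (Filter.Eventually.of_forall fun p => hf0 _),
        hν, lintegral_map f.continuous.measurable.ennreal_ofReal hXmeas]
  -- total mass
  have hWuniv_pt : ∀ ω, ∫⁻ c, ENNReal.ofReal ((1 : BoundedContinuousFunction C ℝ) c) ∂(W ω)
      = W ω Set.univ := by
    intro ω
    simp [lintegral_one]
  obtain ⟨hWu_meas₀, hWu_eq₀⟩ := starL 1 (fun c => by simp)
  have hWunivAEM : AEMeasurable (fun ω => W ω Set.univ) μ := by
    rw [← funext hWuniv_pt]; exact hWu_meas₀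
  have hWuniv1 : ∫⁻ ω, W ω Set.univ ∂μ = 1 := by
    rw [← funext hWuniv_pt, hWu_eq₀]
    simp [lintegral_one]
  -- closed sets
  letI : MetricSpace C := TopologicalSpace.metrizableSpaceMetric C
  have hclosed : ∀ F' : Set C, IsClosed F' →
      AEMeasurable (fun ω => W ω F') μ ∧ ∫⁻ ω, W ω F' ∂μ = ν F' := by
    intro F' hF'
    have δpos : ∀ k : ℕ, 0 < (1:ℝ) / (k + 1) := fun k => by positivity
    have δlim : Tendsto (fun k : ℕ => (1:ℝ) / (k + 1)) atTop (𝓝 0) :=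
      tendsto_one_div_add_atTop_nhds_zero_nat
    set fk : ℕ → BoundedContinuousFunction C ℝ≥0 :=
      fun k => thickenedIndicator (δpos k) F' with hfk
    set fkR : ℕ → BoundedContinuousFunction C ℝ :=
      fun k => (fk k).comp _ isometry_subtype_coe.lipschitz with hfkR
    have hfkR0 : ∀ k c, 0 ≤ fkR k c := fun k c => (fk k c).coe_nonneg
    have hfkRo : ∀ k c, ENNReal.ofReal (fkR k c) = (fk k c : ℝ≥0∞) := fun k c =>
      ENNReal.ofReal_coe_nnreal
    have hW_F : ∀ ω, Tendsto (fun k => ∫⁻ c, (fk k c : ℝ≥0∞) ∂(W ω)) atTop (𝓝 (W ω F')) :=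
      fun ω => tendsto_lintegral_thickenedIndicator_of_isClosed (W ω) hF' δpos δlim
    have hν_F : Tendsto (fun k => ∫⁻ c, (fk k c : ℝ≥0∞) ∂ν) atTop (𝓝 (ν F')) :=
      tendsto_lintegral_thickenedIndicator_of_isClosed ν hF' δpos δlim
    have hIk : ∀ k, (fun ω => ∫⁻ c, (fk k c : ℝ≥0∞) ∂(W ω))
        = fun ω => ∫⁻ c, ENNReal.ofReal (fkR k c) ∂(W ω) := fun k =>
      funext fun ω => lintegral_congr fun c => (hfkRo k c).symm
    have hIkAEM : ∀ k, AEMeasurable (fun ω => ∫⁻ c, (fk k c : ℝ≥0∞) ∂(W ω)) μ := by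
      intro k
      rw [hIk k]
      exact (starL (fkR k) (hfkR0 k)).1
    constructor
    · have hanti : ∀ ω, Antitone (fun k => ∫⁻ c, (fk k c : ℝ≥0∞) ∂(W ω)) := by
        intro ω k l hkl
        apply lintegral_mono
        intro c
        have h5 : fk l c ≤ fk k c :=
          thickenedIndicator_mono (δpos l) (δpos k)
            (one_div_le_one_div_of_le (by positivity)
              (by have : (k:ℝ) ≤ (l:ℝ) := Nat.cast_le.mpr hkl; linarith)) F' c
        show ((fk l c : ℝ≥0) : ℝ≥0∞) ≤ ((fk k c : ℝ≥0) : ℝ≥0∞)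
        exact_mod_cast h5
      have hWFeq : (fun ω => W ω F')
          = fun ω => ⨅ k, ∫⁻ c, (fk k c : ℝ≥0∞) ∂(W ω) := by
        funext ω
        exact tendsto_nhds_unique (hW_F ω) (tendsto_atTop_iInf (hanti ω))
      rw [hWFeq]
      exact AEMeasurable.iInf hIkAEM
    · have hdom : Tendsto (fun k => ∫⁻ ω, (∫⁻ c, (fk k c : ℝ≥0∞) ∂(W ω)) ∂μ) atTop
          (𝓝 (∫⁻ ω, W ω F' ∂μ)) := by
        apply tendsto_lintegral_of_dominated_convergence' (fun ω => W ω Set.univ) hIkAEM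
        · intro k
          apply Filter.Eventually.of_forall
          intro ω
          calc ∫⁻ c, (fk k c : ℝ≥0∞) ∂(W ω) ≤ ∫⁻ _, 1 ∂(W ω) := by
                apply lintegral_mono
                intro c
                have h6 : fk k c ≤ 1 := thickenedIndicator_le_one (δpos k) F' c
                show ((fk k c : ℝ≥0) : ℝ≥0∞) ≤ 1
                exact_mod_cast h6
            _ = W ω Set.univ := by simp [lintegral_one]
        · rw [hWuniv1]; exact ENNReal.one_ne_top
        · exact Filter.Eventually.of_forall hW_F
      have heq_k : ∀ k, ∫⁻ ω, (∫⁻ c, (fk k c : ℝ≥0∞) ∂(W ω)) ∂μ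
          = ∫⁻ c, (fk k c : ℝ≥0∞) ∂ν := by
        intro k
        have h1 := (starL (fkR k) (hfkR0 k)).2
        calc ∫⁻ ω, (∫⁻ c, (fk k c : ℝ≥0∞) ∂(W ω)) ∂μ
            = ∫⁻ ω, (∫⁻ c, ENNReal.ofReal (fkR k c) ∂(W ω)) ∂μ := by rw [← hIk k]
          _ = ∫⁻ c, ENNReal.ofReal (fkR k c) ∂ν := h1
          _ = ∫⁻ c, (fk k c : ℝ≥0∞) ∂ν := lintegral_congr fun c => hfkRo k c
      have hdom' : Tendsto (fun k => ∫⁻ c, (fk k c : ℝ≥0∞) ∂ν) atTop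
          (𝓝 (∫⁻ ω, W ω F' ∂μ)) := by
        have := hdom
        simp only [heq_k] at this
        exact this
      exact tendsto_nhds_unique hdom' hν_F
  -- Dynkin argument
  have key : ∀ ⦃A : Set C⦄, MeasurableSet A →
      (AEMeasurable (fun ω => W ω A) μ ∧ ∫⁻ ω, W ω A ∂μ = ν A) := by
    have h_eq : (inferInstance : MeasurableSpace C)
        = MeasurableSpace.generateFrom {t : Set C | IsClosed t} := by
      rw [BorelSpace.measurable_eq (α := C), borel_eq_generateFrom_isClosed]
    refine MeasurableSpace.induction_on_inter h_eq ?_ ?_ ?_ ?_ ?_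
    · exact fun s hs t ht _ => hs.inter ht
    · constructor
      · simp only [measure_empty]
        exact aemeasurable_const
      · simp [lintegral_const]
    · exact fun t ht => hclosed t ht
    · rintro t htm ⟨h1, h2⟩
      have hcomp : (fun ω => W ω tᶜ) = fun ω => W ω Set.univ - W ω t := funext fun ω =>
        measure_compl htm (measure_ne_top (W ω) t)
      constructor
      · rw [hcomp]
        exact hWunivAEM.sub h1
      · rw [hcomp]
        rw [lintegral_sub' h1 (by rw [h2]; exact measure_ne_top ν t)
          (Filter.Eventually.of_forall fun ω => measure_mono (Set.subset_univ t))]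
        rw [hWuniv1, h2, measure_compl htm (measure_ne_top ν t), measure_univ]
    · rintro g hgdisj hgmeas hg
      have hun : (fun ω => W ω (⋃ i, g i)) = fun ω => ∑' i, W ω (g i) := funext fun ω =>
        measure_iUnion hgdisj hgmeas
      constructor
      · rw [hun]
        exact AEMeasurable.ennreal_tsum fun i => (hg i).1
      · rw [hun, lintegral_tsum fun i => (hg i).1, measure_iUnion hgdisj hgmeas]
        exact tsum_congr fun i => (hg i).2
  intro A hA
  rw [(key hA).2, hν, Measure.map_apply hXmeas hA]
end
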